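/- arXiv:1502.05570 — 13 statements merged into one kernel-verified Lean document; each statement's English description precedes it below -/
import Mathlib

section
/- For every natural number n ≥ 0 and every real x, the identity ((n+2)/(3(n+1)·4^n)) · Σ_{i=0}^{n} (3n−2i+2)·4^i·C(2i,i)·C(2n−2i,n−i)·(x−1/2)^{2i} = ((n+2)/(3π)) · ∫_0^π (1 − 4x(1−x)·sin²(φ/2))^n · (1 + 2cos²(φ/2)) dφ holds, where C(m,k) denotes the binomial coefficient. -/
/-!
Halving the angle and using the symmetry `θ ↦ π - θ`, the right-hand side becomes
`∫₀^π (cos² θ + (2x-1)² sin² θ)^n (1 + 2 cos² θ) dθ`. Expanding binomially reduces it to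
the moments `W i j = ∫₀^π sin^(2i) cos^(2j)`, which satisfy
`binom(i+j, i) W i j = π binom(2i,i) binom(2j,j) / 4^(i+j)` by the Wallis formula and the
reduction `2(i+j+1) W i (j+1) = (2j+1) W i j`.
-/

open Real intervalIntegral
open Nat (centralBinom)

noncomputable def sinCosMoment (i j : ℕ) : ℝ :=
  ∫ x in (0 : ℝ)..π, sin x ^ (2 * i) * cos x ^ (2 * j)

theorem integral_sin_pow_two_mul (i : ℕ) :
    ∫ x in (0 : ℝ)..π, sin x ^ (2 * i) = π * centralBinom i / 4 ^ i := by
  induction i with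
  | zero => simp
  | succ i ih =>
    have hcb : ((i : ℝ) + 1) * centralBinom (i + 1) = 2 * (2 * i + 1) * centralBinom i := by
      exact_mod_cast Nat.succ_mul_centralBinom_succ i
    rw [mul_add_one, integral_sin_pow, ih]
    field_simp
    simp only [sin_zero, sin_pi, zero_pow (Nat.succ_ne_zero _), zero_mul, sub_zero, zero_add]
    push_cast
    linear_combination (-2 * π * 4 ^ i) * hcb

namespace sinCosMoment

theorem zero_right (i : ℕ) : sinCosMoment i 0 = π * centralBinom i / 4 ^ i := by
  simp [sinCosMoment, integral_sin_pow_two_mul]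

theorem succ_right_add_succ_left (i j : ℕ) :
    sinCosMoment i (j + 1) + sinCosMoment (i + 1) j = sinCosMoment i j := by
  unfold sinCosMoment
  rw [← integral_add (by apply Continuous.intervalIntegrable; fun_prop)
    (by apply Continuous.intervalIntegrable; fun_prop)]
  refine integral_congr fun x _ => ?_
  simp only [mul_add_one, pow_add]
  linear_combination (sin x ^ (2 * i) * cos x ^ (2 * j)) * cos_sq_add_sin_sq x

/-- Integration by parts against `d/dx (sin x ^ (2i+1) cos x ^ (2j+1))`, whose boundary terms
vanish at `0` and `π`. -/
theorem mul_succ_right_eq (i j : ℕ) :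
    (2 * i + 1) * sinCosMoment i (j + 1) = (2 * j + 1) * sinCosMoment (i + 1) j := by
  have hderiv : ∀ x ∈ Set.uIcc 0 π,
      HasDerivAt (fun x => sin x ^ (2 * i + 1) * cos x ^ (2 * j + 1))
      ((2 * i + 1) * (sin x ^ (2 * i) * cos x ^ (2 * (j + 1))) -
        (2 * j + 1) * (sin x ^ (2 * (i + 1)) * cos x ^ (2 * j))) x := by
    intro x _
    refine (((hasDerivAt_sin x).fun_pow (2 * i + 1)).fun_mul
      ((hasDerivAt_cos x).fun_pow (2 * j + 1))).congr_deriv ?_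
    simp only [add_tsub_cancel_right, mul_add_one, pow_add]
    push_cast
    ring
  have hint := integral_eq_sub_of_hasDerivAt hderiv
    (by apply Continuous.intervalIntegrable; fun_prop)
  rw [integral_sub (by apply Continuous.intervalIntegrable; fun_prop)
    (by apply Continuous.intervalIntegrable; fun_prop), integral_const_mul, integral_const_mul]
    at hint
  simpa [sinCosMoment, sin_zero, sin_pi, sub_eq_zero] using hint

theorem mul_succ_right (i j : ℕ) :
    2 * (i + j + 1) * sinCosMoment i (j + 1) = (2 * j + 1) * sinCosMoment i j := by
  linear_combination mul_succ_right_eq i j + (2 * j + 1) * succ_right_add_succ_left i j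

theorem choose_mul_eq (i j : ℕ) :
    ((i + j).choose i : ℝ) * sinCosMoment i j =
      π * centralBinom i * centralBinom j / 4 ^ (i + j) := by
  induction j with
  | zero => simp [zero_right]
  | succ j ih =>
    have hchoose : ((i + j).choose i : ℝ) * (i + j + 1) = (i + j + 1).choose i * (j + 1) := by
      have h := (i + j).choose_mul_succ_eq i
      rw [show i + j + 1 - i = j + 1 by omega] at h
      exact_mod_cast h
    have hcb : ((j : ℝ) + 1) * centralBinom (j + 1) = 2 * (2 * j + 1) * centralBinom j := by
      exact_mod_cast Nat.succ_mul_centralBinom_succ j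
    have hne : (2 * ((i : ℝ) + j + 1) * (j + 1)) ≠ 0 := by positivity
    rw [← add_assoc]
    refine mul_right_cancel₀ hne ?_
    calc ((i + j + 1).choose i : ℝ) * sinCosMoment i (j + 1) * (2 * (i + j + 1) * (j + 1))
        = ((i + j + 1).choose i * (j + 1)) * (2 * (i + j + 1) * sinCosMoment i (j + 1)) := by
          ring
      _ = ((i + j).choose i * (i + j + 1)) * ((2 * j + 1) * sinCosMoment i j) := by
          rw [← hchoose, mul_succ_right]
      _ = (i + j + 1) * (2 * j + 1) * (((i + j).choose i) * sinCosMoment i j) := by ring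
      _ = 2 * (i + j + 1) * π * centralBinom i * (2 * (2 * j + 1) * centralBinom j)
            / 4 ^ (i + j + 1) := by
          rw [ih]; field_simp; ring
      _ = π * centralBinom i * centralBinom (j + 1) / 4 ^ (i + j + 1)
            * (2 * (i + j + 1) * (j + 1)) := by
          rw [← hcb]; ring

theorem choose_mul_add_two_mul_succ_right (i j : ℕ) :
    ((i + j).choose i : ℝ) * (sinCosMoment i j + 2 * sinCosMoment i (j + 1)) * (i + j + 1) =
      (i + 3 * j + 2) * (π * centralBinom i * centralBinom j / 4 ^ (i + j)) := by
  rw [← choose_mul_eq]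
  linear_combination ((i + j).choose i : ℝ) * mul_succ_right i j

end sinCosMoment

theorem integral_comp_div_two_of_symm {f : ℝ → ℝ} {a : ℝ}
    (hf : IntervalIntegrable f MeasureTheory.volume 0 a) (hsymm : ∀ θ, f (a - θ) = f θ) :
    ∫ φ in (0 : ℝ)..a, f (φ / 2) = ∫ θ in (0 : ℝ)..a, f θ := by
  have hmid : a / 2 ∈ Set.uIcc 0 a := by
    rcases le_total 0 a with h | h
    · exact Set.mem_uIcc.2 (Or.inl ⟨by linarith, by linarith⟩)
    · exact Set.mem_uIcc.2 (Or.inr ⟨by linarith, by linarith⟩)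
  have hreflect : ∫ θ in a / 2..a, f θ = ∫ θ in (0 : ℝ)..a / 2, f θ := by
    calc ∫ θ in a / 2..a, f θ = ∫ θ in (0 : ℝ)..a / 2, f (a - θ) := by
          rw [integral_comp_sub_left, sub_zero, sub_half]
      _ = ∫ θ in (0 : ℝ)..a / 2, f θ := by simp only [hsymm]
  rw [integral_comp_div f two_ne_zero, zero_div,
    ← integral_add_adjacent_intervals (hf.mono_set (Set.uIcc_subset_uIcc_left hmid))
      (hf.mono_set (Set.uIcc_subset_uIcc_right hmid)), hreflect, smul_eq_mul, two_mul]

theorem integral_cos_sq_add_mul_sin_sq_pow (n : ℕ) (a : ℝ) :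
    ∫ θ in (0 : ℝ)..π, (cos θ ^ 2 + a * sin θ ^ 2) ^ n * (1 + 2 * cos θ ^ 2) =
      ∑ i ∈ Finset.range (n + 1), (n.choose i : ℝ) * a ^ i *
        (sinCosMoment i (n - i) + 2 * sinCosMoment i (n - i + 1)) := by
  have hexpand : ∀ θ, (cos θ ^ 2 + a * sin θ ^ 2) ^ n * (1 + 2 * cos θ ^ 2) =
      ∑ i ∈ Finset.range (n + 1), (n.choose i : ℝ) * a ^ i *
        (sin θ ^ (2 * i) * cos θ ^ (2 * (n - i)) +
          2 * (sin θ ^ (2 * i) * cos θ ^ (2 * (n - i + 1)))) := by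
    intro θ
    rw [add_comm, add_pow, Finset.sum_mul]
    refine Finset.sum_congr rfl fun i _ => ?_
    simp only [mul_pow, pow_mul]
    ring
  simp only [hexpand]
  rw [integral_finsetSum fun i _ => by apply Continuous.intervalIntegrable; fun_prop]
  refine Finset.sum_congr rfl fun i _ => ?_
  rw [integral_const_mul, integral_add (by apply Continuous.intervalIntegrable; fun_prop)
    (by apply Continuous.intervalIntegrable; fun_prop), integral_const_mul]
  rfl

open Real in
theorem stmt0 (n : ℕ) (x : ℝ) :
    ((n : ℝ) + 2) / (3 * ((n : ℝ) + 1) * 4 ^ n) *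
      ∑ i ∈ Finset.range (n + 1),
        (3 * (n : ℝ) - 2 * (i : ℝ) + 2) * 4 ^ i * ((2 * i).choose i : ℝ) *
          ((2 * n - 2 * i).choose (n - i) : ℝ) * (x - 1 / 2) ^ (2 * i) =
    ((n : ℝ) + 2) / (3 * Real.pi) *
      ∫ φ in (0 : ℝ)..Real.pi,
        (1 - 4 * x * (1 - x) * Real.sin (φ / 2) ^ 2) ^ n *
          (1 + 2 * Real.cos (φ / 2) ^ 2) := by
  have hintegrand : ∀ θ,
      1 - 4 * x * (1 - x) * sin θ ^ 2 = cos θ ^ 2 + (2 * x - 1) ^ 2 * sin θ ^ 2 :=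
    fun θ => by linear_combination -(cos_sq_add_sin_sq θ)
  simp only [hintegrand]
  rw [integral_comp_div_two_of_symm
      (f := fun θ => (cos θ ^ 2 + (2 * x - 1) ^ 2 * sin θ ^ 2) ^ n * (1 + 2 * cos θ ^ 2))
      (by apply Continuous.intervalIntegrable; fun_prop)
      (fun θ => by simp only [cos_pi_sub, sin_pi_sub, neg_sq]),
    integral_cos_sq_add_mul_sin_sq_pow, Finset.mul_sum, Finset.mul_sum]
  refine Finset.sum_congr rfl fun i hi => ?_
  obtain ⟨j, rfl⟩ : ∃ j, n = i + j := Nat.exists_eq_add_of_le (Finset.mem_range_succ_iff.mp hi)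
  rw [Nat.add_sub_cancel_left, show 2 * (i + j) - 2 * i = 2 * j by omega,
    ← Nat.centralBinom_eq_two_mul_choose, ← Nat.centralBinom_eq_two_mul_choose]
  have hpow : ((2 * x - 1) ^ 2) ^ i = 4 ^ i * (x - 1 / 2) ^ (2 * i) := by
    rw [pow_mul, ← mul_pow]; ring
  have hmoment : ((i + j).choose i : ℝ) * (sinCosMoment i j + 2 * sinCosMoment i (j + 1)) =
      (i + 3 * j + 2) * (π * centralBinom i * centralBinom j / 4 ^ (i + j)) / (i + j + 1) :=
    eq_div_of_mul_eq (by positivity) (sinCosMoment.choose_mul_add_two_mul_succ_right i j)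
  rw [hpow, mul_right_comm ((i + j).choose i : ℝ), hmoment]
  push_cast
  field_simp
  ring
end

section
/- Let n ≥ 0 be a natural number. Define b_{n,j}(x) := C(n,j)·x^j·(1−x)^{n−j} and, for j = 0,…,n, the normalized hat function Λ_{n,j} on [0,1] by Λ_{n,j}(t) = (n+2)²·(t − j/(n+2)) for t ∈ [j/(n+2), (j+1)/(n+2)], Λ_{n,j}(t) = (n+2)²·((j+2)/(n+2) − t) for t ∈ [(j+1)/(n+2), (j+2)/(n+2)], and Λ_{n,j}(t) = 0 otherwise. Then for every x ∈ [0,1], ∫_0^1 ( Σ_{j=0}^{n} b_{n,j}(x)·Λ_{n,j}(t) )² dt = ((n+2)/(3(n+1)·4^n)) · Σ_{i=0}^{n} (3n−2i+2)·4^i·C(2i,i)·C(2n−2i,n−i)·(x−1/2)^{2i}. -/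
/-!
On `[k/(n+2), (k+1)/(n+2)]` the integrand `Σ_j b_{n,j}(x) Λ_{n,j}(t)` is affine in `t`, with end
values `(n+2) c_k` and `(n+2) c_{k+1}`, where `c_0 = c_{n+2} = 0` and `c_{j+1} = b_{n,j}(x)`.
Integrating the squares of these pieces gives `(n+2)/3 · (2 A_n + B_n)`, where
`A_n = Σ_j b_{n,j}(x)²` and `B_n = Σ_j b_{n,j}(x) b_{n,j+1}(x)`.

Pascal's rule and `(j+1) (1-x) b_{n,j+1} = (n-j) x b_{n,j}` give a first-order linear recurrence
for `(A_n, B_n)`.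
With `a = (2x-1)²`, let `T_n = Σ_{i+k=n} C(2i,i) C(2k,k) aⁱ`, and `I_n`, `K_n` the same sums
weighted by `i` and by `k`. From `(i+1) C(2i+2,i+1) = 2(2i+1) C(2i,i)` they satisfy the same
recurrence, so `4ⁿ A_n = T_n` and `(n+1) 4ⁿ B_n = K_n - I_n`. The right-hand side of the theorem
is `2(n+1) T_n + K_n - I_n`.
-/

/-- The normalized hat function (degree-1 B-spline) with knots
`j/(n+2)`, `(j+1)/(n+2)`, `(j+2)/(n+2)`, normalized to have integral 1. -/
noncomputable def hatLambda (n j : ℕ) (t : ℝ) : ℝ :=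
  if (j : ℝ) / ((n : ℝ) + 2) ≤ t ∧ t ≤ ((j : ℝ) + 1) / ((n : ℝ) + 2) then
    ((n : ℝ) + 2) ^ 2 * (t - (j : ℝ) / ((n : ℝ) + 2))
  else if ((j : ℝ) + 1) / ((n : ℝ) + 2) ≤ t ∧ t ≤ ((j : ℝ) + 2) / ((n : ℝ) + 2) then
    ((n : ℝ) + 2) ^ 2 * (((j : ℝ) + 2) / ((n : ℝ) + 2) - t)
  else 0

open Finset

lemma sum_range_succ_shift_of_eq_zero {M : Type*} [AddCommMonoid M] (f : ℕ → M) {n : ℕ}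
    (h : f (n + 1) = 0) :
    ∑ j ∈ range (n + 1), f (j + 1) + f 0 = ∑ j ∈ range (n + 1), f j := by
  rw [← sum_range_succ', sum_range_succ, h, add_zero]

noncomputable def bern (n j : ℕ) (x : ℝ) : ℝ := n.choose j * x ^ j * (1 - x) ^ (n - j)

lemma bern_of_lt {n j : ℕ} (h : n < j) (x : ℝ) : bern n j x = 0 := by
  simp [bern, Nat.choose_eq_zero_of_lt h]

lemma bern_succ_zero (n : ℕ) (x : ℝ) : bern (n + 1) 0 x = (1 - x) * bern n 0 x := by
  simp only [bern, Nat.choose_zero_right, Nat.sub_zero, pow_zero]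
  ring

lemma bern_succ_succ (n j : ℕ) (x : ℝ) :
    bern (n + 1) (j + 1) x = x * bern n j x + (1 - x) * bern n (j + 1) x := by
  rcases lt_or_ge j n with h | h
  · obtain ⟨m, rfl⟩ := Nat.exists_eq_add_of_lt h
    simp only [bern, Nat.choose_succ_succ', Nat.cast_add,
      show j + m + 1 + 1 - (j + 1) = m + 1 by omega, show j + m + 1 - j = m + 1 by omega,
      show j + m + 1 - (j + 1) = m by omega]
    ring
  · rw [bern_of_lt (by omega : n < j + 1), mul_zero, add_zero]
    rcases h.eq_or_lt with rfl | h
    · simp only [bern, Nat.choose_self, Nat.sub_self, pow_zero]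
      ring
    · rw [bern_of_lt h, bern_of_lt (by omega : n + 1 < j + 1), mul_zero]

-- `n - j` is real subtraction: for `j ≥ n` both sides vanish.
lemma succ_mul_one_sub_mul_bern_succ (n j : ℕ) (x : ℝ) :
    (j + 1) * (1 - x) * bern n (j + 1) x = (n - j) * x * bern n j x := by
  rcases lt_or_ge j n with h | h
  · obtain ⟨m, rfl⟩ := Nat.exists_eq_add_of_lt h
    have hc := Nat.choose_succ_right_eq (j + m + 1) j
    rw [show j + m + 1 - j = m + 1 by omega] at hc
    have hc' : ((j + m + 1).choose (j + 1) : ℝ) * (j + 1) = (j + m + 1).choose j * (m + 1) := by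
      exact_mod_cast hc
    simp only [bern, show j + m + 1 - j = m + 1 by omega, show j + m + 1 - (j + 1) = m by omega]
    push_cast
    linear_combination x ^ (j + 1) * (1 - x) ^ (m + 1) * hc'
  · rw [bern_of_lt (by omega : n < j + 1)]
    rcases h.eq_or_lt with rfl | h
    · simp
    · simp [bern_of_lt h]

noncomputable def bernSqSum (n : ℕ) (x : ℝ) : ℝ := ∑ j ∈ range (n + 1), bern n j x ^ 2

noncomputable def bernProdSum (n : ℕ) (x : ℝ) : ℝ :=
  ∑ j ∈ range (n + 1), bern n j x * bern n (j + 1) x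

lemma sum_bern_succ_sq_add_bern_zero_sq (n : ℕ) (x : ℝ) :
    ∑ j ∈ range (n + 1), bern n (j + 1) x ^ 2 + bern n 0 x ^ 2 = bernSqSum n x :=
  sum_range_succ_shift_of_eq_zero (fun j ↦ bern n j x ^ 2) (by simp [bern_of_lt])

lemma bernSqSum_succ (n : ℕ) (x : ℝ) :
    bernSqSum (n + 1) x =
      (x ^ 2 + (1 - x) ^ 2) * bernSqSum n x + 2 * x * (1 - x) * bernProdSum n x := by
  have hexpand : ∑ j ∈ range (n + 1), bern (n + 1) (j + 1) x ^ 2 =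
      x ^ 2 * bernSqSum n x + 2 * x * (1 - x) * bernProdSum n x
        + (1 - x) ^ 2 * ∑ j ∈ range (n + 1), bern n (j + 1) x ^ 2 := by
    simp only [bernSqSum, bernProdSum, mul_sum, ← sum_add_distrib, bern_succ_succ]
    exact sum_congr rfl fun j _ ↦ by ring
  rw [bernSqSum, sum_range_succ', hexpand, bern_succ_zero, ← sum_bern_succ_sq_add_bern_zero_sq]
  ring

lemma add_two_mul_bern_succ_mul_bern_succ (n j : ℕ) (x : ℝ) :
    (n + 2) * (bern (n + 1) (j + 1) x * bern (n + 1) (j + 2) x) =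
      (n + 1) * (x ^ 2 * (bern n j x * bern n (j + 1) x)
        + (1 - x) ^ 2 * (bern n (j + 1) x * bern n (j + 2) x)
        + 2 * x * (1 - x) * bern n (j + 1) x ^ 2) := by
  rw [bern_succ_succ, bern_succ_succ]
  have h₀ := succ_mul_one_sub_mul_bern_succ n j x
  have h₁ := succ_mul_one_sub_mul_bern_succ n (j + 1) x
  push_cast at h₁
  linear_combination (x * bern n j x + (1 - x) * bern n (j + 1) x) * h₁
    - (x * bern n (j + 1) x + (1 - x) * bern n (j + 2) x) * h₀

lemma add_two_mul_bern_succ_zero_mul_bern_succ_one (n : ℕ) (x : ℝ) :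
    (n + 2) * (bern (n + 1) 0 x * bern (n + 1) 1 x) =
      (n + 1) * ((1 - x) ^ 2 * (bern n 0 x * bern n 1 x) + 2 * x * (1 - x) * bern n 0 x ^ 2) := by
  rw [bern_succ_zero, bern_succ_succ]
  have h₀ := succ_mul_one_sub_mul_bern_succ n 0 x
  push_cast at h₀
  linear_combination (1 - x) * bern n 0 x * h₀

lemma bernProdSum_succ (n : ℕ) (x : ℝ) :
    (n + 2) * bernProdSum (n + 1) x =
      (n + 1) * ((x ^ 2 + (1 - x) ^ 2) * bernProdSum n x + 2 * x * (1 - x) * bernSqSum n x) := by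
  have hshift : ∑ j ∈ range (n + 1), bern n (j + 1) x * bern n (j + 1 + 1) x
      + bern n 0 x * bern n 1 x = bernProdSum n x :=
    sum_range_succ_shift_of_eq_zero (fun j ↦ bern n j x * bern n (j + 1) x) (by simp [bern_of_lt])
  have hexpand :
      (n + 2) * ∑ j ∈ range (n + 1), bern (n + 1) (j + 1) x * bern (n + 1) (j + 1 + 1) x =
      (n + 1) * (x ^ 2 * bernProdSum n x
        + (1 - x) ^ 2 * ∑ j ∈ range (n + 1), bern n (j + 1) x * bern n (j + 1 + 1) x
        + 2 * x * (1 - x) * ∑ j ∈ range (n + 1), bern n (j + 1) x ^ 2) := by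
    simp only [bernProdSum, mul_sum, ← sum_add_distrib]
    exact sum_congr rfl fun j _ ↦ by
      linear_combination add_two_mul_bern_succ_mul_bern_succ n j x
  rw [bernProdSum, sum_range_succ', mul_add, hexpand,
    add_two_mul_bern_succ_zero_mul_bern_succ_one, ← sum_bern_succ_sq_add_bern_zero_sq, ← hshift]
  ring

noncomputable def centralBinomSum (w : ℕ → ℕ → ℝ) (n : ℕ) (a b : ℝ) : ℝ :=
  ∑ p ∈ antidiagonal n,
    w p.1 p.2 * (p.1.centralBinom * p.2.centralBinom : ℝ) * a ^ p.1 * b ^ p.2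

lemma cast_succ_mul_centralBinom_succ (i : ℕ) :
    ((i : ℝ) + 1) * (i + 1).centralBinom = 2 * (2 * i + 1) * i.centralBinom := by
  exact_mod_cast Nat.succ_mul_centralBinom_succ i

lemma centralBinomSum_fst_succ (n : ℕ) (a b : ℝ) :
    centralBinomSum (fun i _ ↦ i) (n + 1) a b =
      2 * a * (2 * centralBinomSum (fun i _ ↦ i) n a b + centralBinomSum 1 n a b) := by
  simp only [centralBinomSum, Finset.Nat.sum_antidiagonal_succ, mul_sum, ← sum_add_distrib,
    Nat.cast_zero, zero_mul, zero_add, Pi.one_apply]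
  refine sum_congr rfl fun ⟨i, k⟩ _ ↦ ?_
  push_cast
  linear_combination
    (k.centralBinom * a ^ (i + 1) * b ^ k : ℝ) * cast_succ_mul_centralBinom_succ i

lemma centralBinomSum_snd_succ (n : ℕ) (a b : ℝ) :
    centralBinomSum (fun _ k ↦ k) (n + 1) a b =
      2 * b * (2 * centralBinomSum (fun _ k ↦ k) n a b + centralBinomSum 1 n a b) := by
  simp only [centralBinomSum, Finset.Nat.sum_antidiagonal_succ', mul_sum, ← sum_add_distrib,
    Nat.cast_zero, zero_mul, zero_add, Pi.one_apply]
  refine sum_congr rfl fun ⟨i, k⟩ _ ↦ ?_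
  push_cast
  linear_combination
    (i.centralBinom * a ^ i * b ^ (k + 1) : ℝ) * cast_succ_mul_centralBinom_succ k

lemma centralBinomSum_fst_add_snd (n : ℕ) (a b : ℝ) :
    centralBinomSum (fun i _ ↦ i) n a b + centralBinomSum (fun _ k ↦ k) n a b =
      n * centralBinomSum 1 n a b := by
  simp only [centralBinomSum, mul_sum, ← sum_add_distrib]
  refine sum_congr rfl fun ⟨i, k⟩ hp ↦ ?_
  rw [← HasAntidiagonal.mem_antidiagonal.mp hp]
  simp only [Pi.one_apply]
  push_cast
  ring

lemma four_pow_mul_bernSqSum_and_bernProdSum (n : ℕ) (x : ℝ) :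
    4 ^ n * bernSqSum n x = centralBinomSum 1 n ((2 * x - 1) ^ 2) 1 ∧
      (n + 1) * 4 ^ n * bernProdSum n x =
        centralBinomSum (fun _ k ↦ k) n ((2 * x - 1) ^ 2) 1
          - centralBinomSum (fun i _ ↦ i) n ((2 * x - 1) ^ 2) 1 := by
  induction n with
  | zero => simp [bernSqSum, bernProdSum, centralBinomSum, bern]
  | succ n ih =>
    obtain ⟨hT, hQ⟩ := ih
    have hA := bernSqSum_succ n x
    have hB := bernProdSum_succ n x
    have hI := centralBinomSum_fst_succ n ((2 * x - 1) ^ 2) 1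
    have hK := centralBinomSum_snd_succ n ((2 * x - 1) ^ 2) 1
    have hIK := centralBinomSum_fst_add_snd n ((2 * x - 1) ^ 2) 1
    have hIK' := centralBinomSum_fst_add_snd (n + 1) ((2 * x - 1) ^ 2) 1
    push_cast at hIK' ⊢
    -- with `a = (2x-1)²`: `4 (x² + (1-x)²) = 2 (a + 1)` and `8 x (1-x) = 2 (1 - a)`
    constructor
    · refine mul_left_cancel₀ (by positivity : (n : ℝ) + 1 ≠ 0) ?_
      linear_combination (n + 1) * 4 ^ (n + 1) * hA + 4 * (n + 1) * (x ^ 2 + (1 - x) ^ 2) * hT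
        + 8 * x * (1 - x) * hQ + hIK' - hI - hK - 2 * ((2 * x - 1) ^ 2 + 1) * hIK
    · linear_combination 4 ^ (n + 1) * hB + 4 * (x ^ 2 + (1 - x) ^ 2) * hQ
        + 8 * (n + 1) * x * (1 - x) * hT - hK + hI - 8 * x * (1 - x) * hIK

lemma add_one_mul_four_pow_mul_two_mul_bernSqSum_add_bernProdSum (n : ℕ) (x : ℝ) :
    (n + 1) * 4 ^ n * (2 * bernSqSum n x + bernProdSum n x) =
      ∑ i ∈ range (n + 1), (3 * n - 2 * i + 2) * 4 ^ i * ((2 * i).choose i : ℝ) *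
        ((2 * n - 2 * i).choose (n - i) : ℝ) * (x - 1 / 2) ^ (2 * i) := by
  obtain ⟨hT, hQ⟩ := four_pow_mul_bernSqSum_and_bernProdSum n x
  have hcomb : (n + 1) * 4 ^ n * (2 * bernSqSum n x + bernProdSum n x) =
      2 * (n + 1) * centralBinomSum 1 n ((2 * x - 1) ^ 2) 1
        + centralBinomSum (fun _ k ↦ k) n ((2 * x - 1) ^ 2) 1
        - centralBinomSum (fun i _ ↦ i) n ((2 * x - 1) ^ 2) 1 := by
    linear_combination 2 * (n + 1) * hT + hQ
  rw [hcomb]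
  simp only [centralBinomSum, mul_sum, ← sum_add_distrib, ← sum_sub_distrib,
    Finset.Nat.sum_antidiagonal_eq_sum_range_succ_mk]
  refine sum_congr rfl fun i hi ↦ ?_
  have hi : i ≤ n := Nat.lt_succ_iff.mp (mem_range.mp hi)
  rw [Nat.centralBinom_eq_two_mul_choose, Nat.centralBinom_eq_two_mul_choose, Nat.mul_sub,
    Nat.cast_sub hi, ← pow_mul, show 2 * x - 1 = 2 * (x - 1 / 2) by ring, mul_pow, pow_mul]
  simp only [Pi.one_apply, one_pow, mul_one]
  ring

noncomputable def tent (u : ℝ) : ℝ := max 0 (1 - |u|)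

@[fun_prop]
lemma continuous_tent : Continuous tent := by unfold tent; fun_prop

lemma tent_zero : tent 0 = 1 := by simp [tent]

lemma tent_of_one_le_abs {u : ℝ} (h : 1 ≤ |u|) : tent u = 0 := max_eq_left (by linarith)

lemma tent_intCast_of_ne_zero {m : ℤ} (hm : m ≠ 0) : tent m = 0 :=
  tent_of_one_le_abs (by exact_mod_cast Int.one_le_abs hm)

lemma tent_one : tent 1 = 0 := by exact_mod_cast tent_intCast_of_ne_zero one_ne_zero

lemma tent_neg_one : tent (-1) = 0 := by
  exact_mod_cast tent_intCast_of_ne_zero (by norm_num : (-1 : ℤ) ≠ 0)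

lemma tent_of_nonneg_of_le_one {u : ℝ} (h₀ : 0 ≤ u) (h₁ : u ≤ 1) : tent u = 1 - u := by
  rw [tent, abs_of_nonneg h₀, max_eq_right (by linarith)]

lemma tent_of_neg_one_le_of_nonpos {u : ℝ} (h₀ : -1 ≤ u) (h₁ : u ≤ 0) :
    tent u = 1 + u := by
  rw [tent, abs_of_nonpos h₁, max_eq_right (by linarith)]; ring

lemma tent_sub_intCast_of_mem_Icc {k z : ℤ} {s : ℝ} (hs : s ∈ Set.Icc (k : ℝ) (k + 1)) :
    tent (s - z) = tent (k - z) * (k + 1 - s) + tent (k + 1 - z) * (s - k) := by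
  obtain ⟨hs₀, hs₁⟩ := hs
  rcases lt_trichotomy z k with hz | rfl | hz
  · have hz : (z : ℝ) + 1 ≤ k := by exact_mod_cast hz
    have hfar : ∀ u : ℝ, (k : ℝ) ≤ u → tent (u - z) = 0 := fun u hu ↦
      tent_of_one_le_abs (le_abs.mpr (Or.inl (by linarith)))
    rw [hfar s hs₀, hfar k le_rfl, hfar (k + 1) (by linarith)]
    ring
  · rw [sub_self, add_sub_cancel_left, tent_zero, tent_one,
      tent_of_nonneg_of_le_one (by linarith) (by linarith)]
    ring
  rcases (show z = k + 1 ∨ k + 2 ≤ z by omega) with rfl | hz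
  · push_cast
    rw [sub_self, show (k : ℝ) - (k + 1) = -1 by ring, tent_zero, tent_neg_one,
      tent_of_neg_one_le_of_nonpos (by linarith) (by linarith)]
    ring
  · have hz : (k : ℝ) + 2 ≤ z := by exact_mod_cast hz
    have hfar : ∀ u : ℝ, u ≤ (k : ℝ) + 1 → tent (u - z) = 0 := fun u hu ↦
      tent_of_one_le_abs (le_abs.mpr (Or.inr (by linarith)))
    rw [hfar s hs₁, hfar k (by linarith), hfar (k + 1) le_rfl]
    ring

lemma hatLambda_eq_mul_tent (n j : ℕ) (t : ℝ) :
    hatLambda n j t = (n + 2) * tent ((n + 2) * t - (j + 1)) := by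
  have hN : (0 : ℝ) < n + 2 := by positivity
  simp only [hatLambda, div_le_iff₀ hN, le_div_iff₀ hN]
  split_ifs with h₁ h₂
  · rw [tent_of_neg_one_le_of_nonpos (by linarith) (by linarith)]
    field_simp
    ring
  · rw [tent_of_nonneg_of_le_one (by linarith) (by linarith)]
    field_simp
    ring
  · rw [tent_of_one_le_abs, mul_zero]
    rw [not_and_or, not_le, not_le] at h₁ h₂
    rw [le_abs]
    rcases h₁ with h₁ | h₁ <;> rcases h₂ with h₂ | h₂
    all_goals first | (left; linarith) | (right; linarith)

lemma integral_sq_affine (a p q : ℝ) :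
    ∫ s in a..a + 1, (p * (a + 1 - s) + q * (s - a)) ^ 2 = (p ^ 2 + p * q + q ^ 2) / 3 := by
  have hsub := intervalIntegral.integral_comp_sub_right
    (fun u ↦ p ^ 2 + 2 * p * (q - p) * u + (q - p) ^ 2 * u ^ 2) a (a := a) (b := a + 1)
  simp only [sub_self, add_sub_cancel_left] at hsub
  calc ∫ s in a..a + 1, (p * (a + 1 - s) + q * (s - a)) ^ 2
      = ∫ u in (0 : ℝ)..1, (p ^ 2 + 2 * p * (q - p) * u + (q - p) ^ 2 * u ^ 2) := by
        rw [← hsub]; congr 1; ext s; ring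
    _ = (p ^ 2 + p * q + q ^ 2) / 3 := by
        rw [intervalIntegral.integral_add, intervalIntegral.integral_add,
          intervalIntegral.integral_const_mul, intervalIntegral.integral_const_mul, integral_id,
          integral_pow]
        · norm_num
          ring
        all_goals exact (by fun_prop : Continuous _).intervalIntegrable _ _

noncomputable def bernTentSum (n : ℕ) (x s : ℝ) : ℝ :=
  ∑ j ∈ range (n + 1), bern n j x * tent (s - (j + 1))

lemma continuous_bernTentSum (n : ℕ) (x : ℝ) : Continuous (bernTentSum n x) := by
  unfold bernTentSum; fun_prop

lemma sum_bern_mul_hatLambda (n : ℕ) (x t : ℝ) :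
    ∑ j ∈ range (n + 1), (n.choose j : ℝ) * x ^ j * (1 - x) ^ (n - j) * hatLambda n j t =
      (n + 2) * bernTentSum n x ((n + 2) * t) := by
  simp only [bernTentSum, mul_sum, hatLambda_eq_mul_tent, bern]
  exact sum_congr rfl fun j _ ↦ by ring

lemma bernTentSum_zero (n : ℕ) (x : ℝ) : bernTentSum n x 0 = 0 :=
  sum_eq_zero fun j _ ↦ by
    have h := tent_intCast_of_ne_zero (m := -(j + 1)) (by omega)
    push_cast at h
    rw [zero_sub, h, mul_zero]

lemma bernTentSum_natCast_succ (n j : ℕ) (x : ℝ) :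
    bernTentSum n x (j + 1 : ℕ) = bern n j x := by
  rw [Nat.cast_succ, bernTentSum, sum_eq_single j]
  · rw [add_sub_add_right_eq_sub, sub_self, tent_zero, mul_one]
  · intro i _ hij
    have h := tent_intCast_of_ne_zero (m := j - i) (by omega)
    push_cast at h
    rw [add_sub_add_right_eq_sub, h, mul_zero]
  · intro hj
    rw [bern_of_lt (by simpa using hj), zero_mul]

lemma bernTentSum_of_mem_Icc (n k : ℕ) (x : ℝ) {s : ℝ}
    (hs : s ∈ Set.Icc (k : ℝ) (k + 1)) :
    bernTentSum n x s = bernTentSum n x k * (k + 1 - s) + bernTentSum n x (k + 1) * (s - k) := by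
  simp only [bernTentSum, sum_mul, ← sum_add_distrib]
  refine sum_congr rfl fun j _ ↦ ?_
  have h := tent_sub_intCast_of_mem_Icc (k := k) (z := j + 1) (s := s) (by exact_mod_cast hs)
  push_cast at h
  rw [h]
  ring

lemma integral_bernTentSum_sq (n k : ℕ) (x : ℝ) :
    ∫ s in (k : ℝ)..k + 1, bernTentSum n x s ^ 2 =
      (bernTentSum n x k ^ 2 + bernTentSum n x k * bernTentSum n x (k + 1)
        + bernTentSum n x (k + 1) ^ 2) / 3 := by
  rw [← integral_sq_affine]
  refine intervalIntegral.integral_congr fun s hs ↦ ?_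
  rw [Set.uIcc_of_le (by linarith)] at hs
  simp only [bernTentSum_of_mem_Icc n k x hs]

lemma sum_range_bernTentSum_sq (n : ℕ) (x : ℝ) :
    ∑ k ∈ range (n + 2), (bernTentSum n x k ^ 2 + bernTentSum n x k * bernTentSum n x (k + 1)
        + bernTentSum n x (k + 1) ^ 2) = 2 * bernSqSum n x + bernProdSum n x := by
  rw [sum_range_succ']
  simp only [← Nat.cast_succ, bernTentSum_natCast_succ]
  simp only [Nat.cast_zero, bernTentSum_zero, sum_add_distrib]
  have hsq := sum_bern_succ_sq_add_bern_zero_sq n x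
  simp only [bernSqSum, bernProdSum] at hsq ⊢
  linear_combination hsq

lemma integral_sum_bern_mul_hatLambda_sq (n : ℕ) (x : ℝ) :
    ∫ t in (0 : ℝ)..1,
        (∑ j ∈ range (n + 1),
          (n.choose j : ℝ) * x ^ j * (1 - x) ^ (n - j) * hatLambda n j t) ^ 2 =
      (n + 2) / 3 * (2 * bernSqSum n x + bernProdSum n x) := by
  have hN : (n : ℝ) + 2 ≠ 0 := by positivity
  have hsplit := intervalIntegral.sum_integral_adjacent_intervals (a := fun k : ℕ ↦ (k : ℝ))
    (n := n + 2) (f := fun s ↦ bernTentSum n x s ^ 2) (μ := MeasureTheory.volume)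
    fun k _ ↦ ((continuous_bernTentSum n x).pow 2).intervalIntegrable _ _
  push_cast at hsplit
  simp only [sum_bern_mul_hatLambda, mul_pow, intervalIntegral.integral_const_mul,
    intervalIntegral.integral_comp_mul_left (fun s ↦ bernTentSum n x s ^ 2) hN, mul_zero, mul_one,
    ← hsplit, integral_bernTentSum_sq, ← sum_div, sum_range_bernTentSum_sq, smul_eq_mul]
  field_simp

theorem stmt1_general (n : ℕ) (x : ℝ) :
    (∫ t in (0 : ℝ)..1,
        (∑ j ∈ Finset.range (n + 1),
          (n.choose j : ℝ) * x ^ j * (1 - x) ^ (n - j) * hatLambda n j t) ^ 2) =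
    ((n : ℝ) + 2) / (3 * ((n : ℝ) + 1) * 4 ^ n) *
      ∑ i ∈ Finset.range (n + 1),
        (3 * (n : ℝ) - 2 * (i : ℝ) + 2) * 4 ^ i * ((2 * i).choose i : ℝ) *
          ((2 * n - 2 * i).choose (n - i) : ℝ) * (x - 1 / 2) ^ (2 * i) := by
  rw [integral_sum_bern_mul_hatLambda_sq,
    ← add_one_mul_four_pow_mul_two_mul_bernSqSum_add_bernProdSum]
  field_simp

theorem stmt1 (n : ℕ) (x : ℝ) (hx : x ∈ Set.Icc (0 : ℝ) 1) :
    (∫ t in (0 : ℝ)..1,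
        (∑ j ∈ Finset.range (n + 1),
          (n.choose j : ℝ) * x ^ j * (1 - x) ^ (n - j) * hatLambda n j t) ^ 2) =
    ((n : ℝ) + 2) / (3 * ((n : ℝ) + 1) * 4 ^ n) *
      ∑ i ∈ Finset.range (n + 1),
        (3 * (n : ℝ) - 2 * (i : ℝ) + 2) * 4 ^ i * ((2 * i).choose i : ℝ) *
          ((2 * n - 2 * i).choose (n - i) : ℝ) * (x - 1 / 2) ^ (2 * i) :=
  stmt1_general n x
end

section
/- Let n ≥ 0 be a natural number. Define b_{n,j}(x) := C(n,j)·x^j·(1−x)^{n−j} and, for j = 0,…,n, the normalized hat function Λ_{n,j} on [0,1] by Λ_{n,j}(t) = (n+2)²·(t − j/(n+2)) for t ∈ [j/(n+2), (j+1)/(n+2)], Λ_{n,j}(t) = (n+2)²·((j+2)/(n+2) − t) for t ∈ [(j+1)/(n+2), (j+2)/(n+2)], and Λ_{n,j}(t) = 0 otherwise. Define the operator Q f(x) := Σ_{j=0}^{n} b_{n,j}(x) · ∫_0^1 f(t)·Λ_{n,j}(t) dt. Then for every x ∈ [0,1], the variance Q e_2(x) − (Q e_1(x))², where e_i(t) =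 t^i, equals n/(n+2)² · x(1−x) + 1/(6(n+2)²). -/
/-- The second Kantorovich modification `Q_{n+2}^{[2]}` of the Bernstein operator. -/
noncomputable def kantorovichQ (n : ℕ) (f : ℝ → ℝ) (x : ℝ) : ℝ :=
  ∑ j ∈ Finset.range (n + 1),
    (n.choose j : ℝ) * x ^ j * (1 - x) ^ (n - j) * ∫ t in (0 : ℝ)..1, f t * hatLambda n j t

/-!
Integrating against the hat function `Λ_{n,j}` turns the monomials `t` and `t²` into polynomials
in `j`, namely `(j+1)/(n+2)` and `((j+1)² + 1/6)/(n+2)²`. Hence `Q e₁` and `Q e₂` are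
combinations of the Bernstein moments `∑ b_{n,j} = 1`, `∑ j b_{n,j} = n x` and
`∑ j(j-1) b_{n,j} = n(n-1) x²`, and the variance is a polynomial identity in `x` and `n`.
-/

open intervalIntegral

section PowerIntegrals

theorem integral_pow_mul_sub_left (k : ℕ) (a b : ℝ) :
    ∫ t in a..b, t ^ k * (t - a) =
      (b ^ (k + 2) - a ^ (k + 2)) / (k + 2) - a * ((b ^ (k + 1) - a ^ (k + 1)) / (k + 1)) := by
  have h : ∀ t : ℝ, t ^ k * (t - a) = t ^ (k + 1) - a * t ^ k := fun t => by ring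
  simp only [h]
  rw [integral_sub (f := fun t => t ^ (k + 1)) (g := fun t => a * t ^ k)
    ((continuous_pow _).intervalIntegrable _ _)
    ((continuous_const.mul (continuous_pow _)).intervalIntegrable _ _),
    integral_const_mul, integral_pow, integral_pow]
  push_cast
  ring

theorem integral_pow_mul_sub_right (k : ℕ) (b c : ℝ) :
    ∫ t in b..c, t ^ k * (c - t) =
      c * ((c ^ (k + 1) - b ^ (k + 1)) / (k + 1)) - (c ^ (k + 2) - b ^ (k + 2)) / (k + 2) := by
  have h : ∀ t : ℝ, t ^ k * (c - t) = c * t ^ k - t ^ (k + 1) := fun t => by ring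
  simp only [h]
  rw [integral_sub (f := fun t => c * t ^ k) (g := fun t => t ^ (k + 1))
    ((continuous_const.mul (continuous_pow _)).intervalIntegrable _ _)
    ((continuous_pow _).intervalIntegrable _ _),
    integral_const_mul, integral_pow, integral_pow]
  push_cast
  ring

end PowerIntegrals

section HatFunction

variable (n j : ℕ)

theorem hatLambda_eq_mul_max_min (t : ℝ) :
    hatLambda n j t = ((n : ℝ) + 2) ^ 2 *
      max 0 (min (t - j / ((n : ℝ) + 2)) ((j + 2) / ((n : ℝ) + 2) - t)) := by
  have h1 : (0 : ℝ) < 1 / ((n : ℝ) + 2) := by positivity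
  have hb : ((j : ℝ) + 1) / (n + 2) = j / (n + 2) + 1 / (n + 2) := by ring
  have hc : ((j : ℝ) + 2) / (n + 2) = j / (n + 2) + 1 / (n + 2) + 1 / (n + 2) := by ring
  unfold hatLambda
  split_ifs with hl hr
  · rw [min_eq_left (by linarith [hl.2]), max_eq_right (by linarith [hl.1])]
  · rw [min_eq_right (by linarith [hr.1]), max_eq_right (by linarith [hr.2])]
  · push Not at hl hr
    rcases lt_or_ge t (j / ((n : ℝ) + 2)) with ht | ht
    · rw [max_eq_left (le_trans (min_le_left _ _) (by linarith)), mul_zero]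
    · have := hr (hl ht).le
      rw [max_eq_left (le_trans (min_le_right _ _) (by linarith)), mul_zero]

theorem continuous_hatLambda : Continuous (hatLambda n j) := by
  rw [funext (hatLambda_eq_mul_max_min n j)]
  fun_prop

variable {n j} {t : ℝ}

theorem hatLambda_eq_zero_of_le (ht : t ≤ j / ((n : ℝ) + 2)) : hatLambda n j t = 0 := by
  rw [hatLambda_eq_mul_max_min, max_eq_left (le_trans (min_le_left _ _) (sub_nonpos.2 ht)),
    mul_zero]

theorem hatLambda_eq_zero_of_ge (ht : (j + 2) / ((n : ℝ) + 2) ≤ t) : hatLambda n j t = 0 := by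
  rw [hatLambda_eq_mul_max_min, max_eq_left (le_trans (min_le_right _ _) (sub_nonpos.2 ht)),
    mul_zero]

theorem hatLambda_of_mem_Icc_left
    (ht : t ∈ Set.Icc (j / ((n : ℝ) + 2)) ((j + 1) / ((n : ℝ) + 2))) :
    hatLambda n j t = ((n : ℝ) + 2) ^ 2 * (t - j / ((n : ℝ) + 2)) :=
  if_pos ht

theorem hatLambda_of_mem_Icc_right
    (ht : t ∈ Set.Icc ((j + 1) / ((n : ℝ) + 2)) ((j + 2) / ((n : ℝ) + 2))) :
    hatLambda n j t = ((n : ℝ) + 2) ^ 2 * ((j + 2) / ((n : ℝ) + 2) - t) := by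
  have hmid : ((j : ℝ) + 1) / (n + 2) - j / (n + 2) = (j + 2) / (n + 2) - (j + 1) / (n + 2) := by
    ring
  rw [hatLambda_eq_mul_max_min, min_eq_right (by linarith [ht.1]),
    max_eq_right (by linarith [ht.2])]

/-- For `j ≤ n` the support `[j/(n+2), (j+2)/(n+2)]` of `Λ_{n,j}` lies in `[0, 1]`. -/
theorem integral_mul_hatLambda (hj : j ≤ n) {f : ℝ → ℝ} (hf : Continuous f) :
    ∫ t in (0 : ℝ)..1, f t * hatLambda n j t =
      ((n : ℝ) + 2) ^ 2 *
        ((∫ t in j / ((n : ℝ) + 2)..(j + 1) / ((n : ℝ) + 2),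
            f t * (t - j / ((n : ℝ) + 2))) +
          ∫ t in (j + 1) / ((n : ℝ) + 2)..(j + 2) / ((n : ℝ) + 2),
            f t * ((j + 2) / ((n : ℝ) + 2) - t)) := by
  have hN : (0 : ℝ) < n + 2 := by positivity
  set a : ℝ := j / (n + 2)
  set b : ℝ := (j + 1) / (n + 2)
  set c : ℝ := (j + 2) / (n + 2) with hc
  have hab : a ≤ b := div_le_div_of_nonneg_right (by linarith) hN.le
  have hbc : b ≤ c := div_le_div_of_nonneg_right (by linarith) hN.le
  have h0a : 0 ≤ a := by positivity
  have hc1 : c ≤ 1 := by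
    rw [hc, div_le_one hN]
    exact_mod_cast Nat.add_le_add_right hj 2
  have hint : ∀ p q : ℝ,
      IntervalIntegrable (fun t => f t * hatLambda n j t) MeasureTheory.volume p q :=
    fun p q => (hf.mul (continuous_hatLambda n j)).intervalIntegrable p q
  have left_zero : ∫ t in (0 : ℝ)..a, f t * hatLambda n j t = 0 := by
    refine (integral_congr fun t ht => ?_).trans integral_zero
    rw [Set.uIcc_of_le h0a] at ht
    simp [hatLambda_eq_zero_of_le ht.2]
  have right_zero : ∫ t in c..(1 : ℝ), f t * hatLambda n j t = 0 := by
    refine (integral_congr fun t ht => ?_).trans integral_zero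
    rw [Set.uIcc_of_le hc1] at ht
    simp [hatLambda_eq_zero_of_ge ht.1]
  have rising :
      ∫ t in a..b, f t * hatLambda n j t = ∫ t in a..b, (n + 2) ^ 2 * (f t * (t - a)) := by
    refine integral_congr fun t ht => ?_
    rw [Set.uIcc_of_le hab] at ht
    simp only [hatLambda_of_mem_Icc_left ht]
    ring
  have falling :
      ∫ t in b..c, f t * hatLambda n j t = ∫ t in b..c, (n + 2) ^ 2 * (f t * (c - t)) := by
    refine integral_congr fun t ht => ?_
    rw [Set.uIcc_of_le hbc] at ht
    simp only [hatLambda_of_mem_Icc_right ht]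
    ring
  rw [← integral_add_adjacent_intervals (hint 0 a) (hint a 1),
    ← integral_add_adjacent_intervals (hint a b) (hint b 1),
    ← integral_add_adjacent_intervals (hint b c) (hint c 1),
    left_zero, right_zero, rising, falling, integral_const_mul, integral_const_mul]
  ring

theorem integral_id_mul_hatLambda (hj : j ≤ n) :
    ∫ t in (0 : ℝ)..1, t ^ 1 * hatLambda n j t = (j + 1) / ((n : ℝ) + 2) := by
  have hN : (n : ℝ) + 2 ≠ 0 := by positivity
  rw [integral_mul_hatLambda hj (continuous_pow _), integral_pow_mul_sub_left,
    integral_pow_mul_sub_right]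
  push_cast
  field_simp
  ring

theorem integral_sq_mul_hatLambda (hj : j ≤ n) :
    ∫ t in (0 : ℝ)..1, t ^ 2 * hatLambda n j t =
      (((j : ℝ) + 1) ^ 2 + 1 / 6) / ((n : ℝ) + 2) ^ 2 := by
  have hN : (n : ℝ) + 2 ≠ 0 := by positivity
  rw [integral_mul_hatLambda hj (continuous_pow _), integral_pow_mul_sub_left,
    integral_pow_mul_sub_right]
  push_cast
  field_simp
  ring

end HatFunction

section BernsteinMoments

open Polynomial

variable (n : ℕ) (x : ℝ)

theorem sum_bernstein_eval :
    ∑ j ∈ Finset.range (n + 1), (n.choose j : ℝ) * x ^ j * (1 - x) ^ (n - j) = 1 := by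
  simpa [eval_finsetSum, bernsteinPolynomial] using
    congrArg (eval x) (bernsteinPolynomial.sum ℝ n)

theorem sum_mul_bernstein_eval :
    ∑ j ∈ Finset.range (n + 1), (j : ℝ) * ((n.choose j : ℝ) * x ^ j * (1 - x) ^ (n - j)) =
      n * x := by
  simpa [eval_finsetSum, bernsteinPolynomial, nsmul_eq_mul, mul_assoc] using
    congrArg (eval x) (bernsteinPolynomial.sum_smul ℝ n)

theorem sum_descFactorial_two_mul_bernstein_eval :
    ∑ j ∈ Finset.range (n + 1),
        ((j : ℝ) ^ 2 - j) * ((n.choose j : ℝ) * x ^ j * (1 - x) ^ (n - j)) =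
      ((n : ℝ) ^ 2 - n) * x ^ 2 := by
  have h := congrArg (eval x) (bernsteinPolynomial.sum_mul_smul ℝ n)
  simp only [eval_finsetSum, bernsteinPolynomial, eval_mul, eval_pow, eval_natCast, eval_sub,
    eval_one, eval_X, nsmul_eq_mul] at h
  have cast : ∀ m : ℕ, ((m * (m - 1) : ℕ) : ℝ) = (m : ℝ) ^ 2 - m := by
    rintro (_ | m) <;> push_cast <;> ring
  simpa only [cast] using h

end BernsteinMoments

section KantorovichMoments

variable (n : ℕ) (x : ℝ)

theorem kantorovichQ_id :
    kantorovichQ n (fun t => t ^ 1) x = (n * x + 1) / ((n : ℝ) + 2) := by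
  have hN : (n : ℝ) + 2 ≠ 0 := by positivity
  calc kantorovichQ n (fun t => t ^ 1) x
      = ∑ j ∈ Finset.range (n + 1),
          (1 / ((n : ℝ) + 2) * ((j : ℝ) * ((n.choose j : ℝ) * x ^ j * (1 - x) ^ (n - j))) +
            1 / ((n : ℝ) + 2) * ((n.choose j : ℝ) * x ^ j * (1 - x) ^ (n - j))) := by
        refine Finset.sum_congr rfl fun j hj => ?_
        rw [integral_id_mul_hatLambda (Nat.lt_succ_iff.mp (Finset.mem_range.mp hj))]
        field_simp
    _ = (n * x + 1) / ((n : ℝ) + 2) := by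
        rw [Finset.sum_add_distrib, ← Finset.mul_sum, ← Finset.mul_sum, sum_bernstein_eval,
          sum_mul_bernstein_eval]
        field_simp

theorem kantorovichQ_sq :
    kantorovichQ n (fun t => t ^ 2) x =
      (((n : ℝ) ^ 2 - n) * x ^ 2 + 3 * n * x + 7 / 6) / ((n : ℝ) + 2) ^ 2 := by
  have hN : (n : ℝ) + 2 ≠ 0 := by positivity
  calc kantorovichQ n (fun t => t ^ 2) x
      = ∑ j ∈ Finset.range (n + 1),
          (1 / ((n : ℝ) + 2) ^ 2 *
              (((j : ℝ) ^ 2 - j) * ((n.choose j : ℝ) * x ^ j * (1 - x) ^ (n - j))) +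
            3 / ((n : ℝ) + 2) ^ 2 *
              ((j : ℝ) * ((n.choose j : ℝ) * x ^ j * (1 - x) ^ (n - j))) +
            7 / (6 * ((n : ℝ) + 2) ^ 2) * ((n.choose j : ℝ) * x ^ j * (1 - x) ^ (n - j))) := by
        refine Finset.sum_congr rfl fun j hj => ?_
        rw [integral_sq_mul_hatLambda (Nat.lt_succ_iff.mp (Finset.mem_range.mp hj))]
        field_simp
        ring
    _ = (((n : ℝ) ^ 2 - n) * x ^ 2 + 3 * n * x + 7 / 6) / ((n : ℝ) + 2) ^ 2 := by
        rw [Finset.sum_add_distrib, Finset.sum_add_distrib, ← Finset.mul_sum, ← Finset.mul_sum,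
          ← Finset.mul_sum, sum_bernstein_eval, sum_mul_bernstein_eval,
          sum_descFactorial_two_mul_bernstein_eval]
        field_simp

end KantorovichMoments

theorem stmt2_general (n : ℕ) (x : ℝ) :
    kantorovichQ n (fun t => t ^ 2) x - (kantorovichQ n (fun t => t ^ 1) x) ^ 2 =
      (n : ℝ) / ((n : ℝ) + 2) ^ 2 * (x * (1 - x)) + 1 / (6 * ((n : ℝ) + 2) ^ 2) := by
  have hN : (n : ℝ) + 2 ≠ 0 := by positivity
  rw [kantorovichQ_sq, kantorovichQ_id]
  field_simp
  ring

theorem stmt2 (n : ℕ) (x : ℝ) (hx : x ∈ Set.Icc (0 : ℝ) 1) :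
    kantorovichQ n (fun t => t ^ 2) x - (kantorovichQ n (fun t => t ^ 1) x) ^ 2 =
      (n : ℝ) / ((n : ℝ) + 2) ^ 2 * (x * (1 - x)) + 1 / (6 * ((n : ℝ) + 2) ^ 2) :=
  stmt2_general n x
end

section
/- For every natural number n ≥ 0 and every real x, F_n(x) = (1/π) · ∫_0^π (1 − 4x(1−x)·sin²(φ/2))^n dφ, where F_n(x) := Σ_{k=0}^{n} ( C(n,k)·x^k·(1−x)^{n−k} )². -/
/-!
With `z = x e^{iφ} + (1 - x)` one has `|z|² = 1 - 4x(1-x) sin²(φ/2)`, and by the binomial theorem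
`zⁿ = ∑ₖ bₖ e^{ikφ}` where the `bₖ` are the Bernstein basis polynomials at `x`. Since the `bₖ`
are real, `|zⁿ|² = ∑ⱼ ∑ₖ bⱼ bₖ cos((j-k)φ)`, and integrating over `[0, π]` kills every
off-diagonal term, leaving `π ∑ₖ bₖ²`.
-/

/-- `F n x` is the sum of squares of the Bernstein basis polynomials of degree `n`. -/
noncomputable def bernsteinF (n : ℕ) (x : ℝ) : ℝ :=
  ∑ k ∈ Finset.range (n + 1), ((n.choose k : ℝ) * x ^ k * (1 - x) ^ (n - k)) ^ 2

open Finset Real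

lemma integral_cos_intCast_mul (m : ℤ) :
    ∫ φ in (0 : ℝ)..π, cos (m * φ) = if m = 0 then π else 0 := by
  split_ifs with hm
  · simp [hm]
  · have hm' : (m : ℝ) ≠ 0 := Int.cast_ne_zero.2 hm
    rw [intervalIntegral.integral_comp_mul_left cos hm']
    simp [integral_cos, sin_int_mul_pi]

lemma normSq_sum_ofReal_mul_exp (s : Finset ℕ) (a : ℕ → ℝ) (φ : ℝ) :
    Complex.normSq (∑ k ∈ s, (a k : ℂ) * Complex.exp ((k * φ : ℝ) * Complex.I)) =
      ∑ j ∈ s, ∑ k ∈ s, a j * a k * cos (((j : ℝ) - k) * φ) := by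
  have hre : (∑ k ∈ s, (a k : ℂ) * Complex.exp ((k * φ : ℝ) * Complex.I)).re =
      ∑ k ∈ s, a k * cos (k * φ) := by
    simp only [Complex.re_sum, Complex.re_ofReal_mul, Complex.exp_ofReal_mul_I_re]
  have him : (∑ k ∈ s, (a k : ℂ) * Complex.exp ((k * φ : ℝ) * Complex.I)).im =
      ∑ k ∈ s, a k * sin (k * φ) := by
    simp only [Complex.im_sum, Complex.im_ofReal_mul, Complex.exp_ofReal_mul_I_im]
  rw [Complex.normSq_apply, hre, him, sum_mul_sum, sum_mul_sum, ← sum_add_distrib]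
  refine sum_congr rfl fun j _ => ?_
  rw [← sum_add_distrib]
  refine sum_congr rfl fun k _ => ?_
  rw [sub_mul, cos_sub]
  ring

/-- Parseval's identity on a half period, valid because the coefficients are real. -/
theorem integral_normSq_sum_ofReal_mul_exp (s : Finset ℕ) (a : ℕ → ℝ) :
    ∫ φ in (0 : ℝ)..π,
        Complex.normSq (∑ k ∈ s, (a k : ℂ) * Complex.exp ((k * φ : ℝ) * Complex.I)) =
      π * ∑ k ∈ s, a k ^ 2 := by
  have hcos : ∀ j k : ℕ,
      ∫ φ in (0 : ℝ)..π, cos (((j : ℝ) - k) * φ) = if j = k then π else 0 := by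
    intro j k
    have := integral_cos_intCast_mul ((j : ℤ) - k)
    push_cast at this
    simpa [sub_eq_zero] using this
  simp_rw [normSq_sum_ofReal_mul_exp]
  rw [intervalIntegral.integral_finsetSum fun j _ =>
    (by fun_prop : Continuous _).intervalIntegrable _ _, mul_sum]
  refine sum_congr rfl fun j hj => ?_
  rw [intervalIntegral.integral_finsetSum fun k _ =>
    (by fun_prop : Continuous _).intervalIntegrable _ _]
  simp_rw [intervalIntegral.integral_const_mul, hcos, mul_ite, mul_zero, sum_ite_eq, if_pos hj]
  ring

lemma normSq_ofReal_mul_exp_add_one_sub (x φ : ℝ) :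
    Complex.normSq (x * Complex.exp (φ * Complex.I) + (1 - x)) =
      1 - 4 * x * (1 - x) * sin (φ / 2) ^ 2 := by
  have hre : (x * Complex.exp (φ * Complex.I) + (1 - x)).re = x * cos φ + (1 - x) := by
    simp [Complex.exp_ofReal_mul_I_re]
  have him : (x * Complex.exp (φ * Complex.I) + (1 - x)).im = x * sin φ := by
    simp [Complex.exp_ofReal_mul_I_im]
  have hcos : cos φ = 1 - 2 * sin (φ / 2) ^ 2 := by
    rw [← cos_two_mul_eq_one_sub, mul_div_cancel₀ φ two_ne_zero]
  rw [Complex.normSq_apply, hre, him]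
  linear_combination x ^ 2 * sin_sq_add_cos_sq φ + 2 * x * (1 - x) * hcos

lemma ofReal_mul_exp_add_one_sub_pow (n : ℕ) (x φ : ℝ) :
    ((x : ℂ) * Complex.exp (φ * Complex.I) + (1 - x)) ^ n =
      ∑ k ∈ range (n + 1), ((n.choose k * x ^ k * (1 - x) ^ (n - k) : ℝ) : ℂ) *
        Complex.exp ((k * φ : ℝ) * Complex.I) := by
  rw [add_pow]
  refine sum_congr rfl fun k _ => ?_
  rw [mul_pow, ← Complex.exp_nat_mul]
  push_cast
  ring_nf

theorem stmt3 (n : ℕ) (x : ℝ) :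
    bernsteinF n x =
      1 / Real.pi *
        ∫ φ in (0 : ℝ)..Real.pi, (1 - 4 * x * (1 - x) * Real.sin (φ / 2) ^ 2) ^ n := by
  have hintegrand : ∀ φ : ℝ, (1 - 4 * x * (1 - x) * sin (φ / 2) ^ 2) ^ n =
      Complex.normSq (∑ k ∈ range (n + 1),
        ((n.choose k * x ^ k * (1 - x) ^ (n - k) : ℝ) : ℂ) *
          Complex.exp ((k * φ : ℝ) * Complex.I)) := fun φ => by
    rw [← normSq_ofReal_mul_exp_add_one_sub, ← map_pow, ofReal_mul_exp_add_one_sub_pow]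
  simp_rw [hintegrand, integral_normSq_sum_ofReal_mul_exp, bernsteinF]
  field_simp
end

section
/- For every real q and every x ∈ (0, 1/2), the identity (1−x)^{−2q} · Σ_{k=0}^{∞} ( ((q)_k)² / (k!)² ) · ( x/(x−1) )^{2k} = (1/π) · ∫_0^π (1 − 4x(1−x)·sin²(φ/2))^{−q} dφ holds, where (q)_k = q(q+1)⋯(q+k−1) is the ascending Pochhammer symbol; in particular the series on the left converges for x ∈ (0,1/2). -/
/-!
Put `s = x/(x-1)`, so that `|s| < 1` and `1 - 4x(1-x)sin²(φ/2) = (1-x)²(1 - 2s cos φ + s²)`.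
On the circle `w = s e^{iφ}` the binomial series gives
`(1 - w)^{-q} = ∑ (q)_k/k! · s^k e^{ikφ}`, and `|1 - w|² = 1 - 2s cos φ + s²`.
The coefficients `γ_k = (q)_k/k! · s^k` are real and absolutely summable, so expanding
`|∑ γ_k e^{ikφ}|² = ∑_{m,n} γ_m γ_n cos((m-n)φ)` and integrating term by term over `[0, π]`
leaves only the diagonal: `∫_0^π |∑ γ_k e^{ikφ}|² dφ = π ∑ γ_k²`, which is the identity.
-/

section

open Complex Polynomial MeasureTheory
open scoped Nat ComplexConjugate

theorem Ring.choose_add_natCast_sub_one {K : Type*} [Field K] [CharZero K] (a : K) (n : ℕ) :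
    Ring.choose (a + n - 1) n = (ascPochhammer K n).eval a / n ! := by
  rw [← Ring.multichoose_eq, eq_div_iff (Nat.cast_ne_zero.2 n.factorial_ne_zero), mul_comm,
    ← nsmul_eq_mul, Ring.factorial_nsmul_multichoose_eq_ascPochhammer,
    ascPochhammer_smeval_eq_eval]

theorem Complex.ascPochhammer_eval_ofReal (q : ℝ) (n : ℕ) :
    (ascPochhammer ℂ n).eval (q : ℂ) = (ascPochhammer ℝ n).eval q := by
  rw [ascPochhammer_eval₂ ofRealHom]
  exact eval₂_hom ofRealHom q

theorem Complex.hasFPowerSeriesOnBall_one_sub_cpow_neg (a : ℂ) :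
    HasFPowerSeriesOnBall (fun w ↦ (1 - w) ^ (-a))
      (.ofScalars ℂ fun n ↦ (ascPochhammer ℂ n).eval a / n !) 0 1 := by
  simpa [← Ring.choose_add_natCast_sub_one, cpow_neg] using
    one_div_one_sub_cpow_hasFPowerSeriesOnBall_zero a

theorem Complex.hasSum_ascPochhammer_div_factorial_mul_pow (a : ℂ) {w : ℂ} (hw : ‖w‖ < 1) :
    HasSum (fun n ↦ (ascPochhammer ℂ n).eval a / n ! * w ^ n) ((1 - w) ^ (-a)) := by
  have := (hasFPowerSeriesOnBall_one_sub_cpow_neg a).hasSum (y := w)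
    (by simpa [← ofReal_norm, ENNReal.ofReal_lt_one] using hw)
  simpa [FormalMultilinearSeries.ofScalars_apply_eq, mul_comm] using this

theorem Complex.summable_norm_ascPochhammer_div_factorial_mul_pow (a : ℂ) {r : ℝ} (hr₀ : 0 ≤ r)
    (hr : r < 1) : Summable fun n ↦ ‖(ascPochhammer ℂ n).eval a / (n ! : ℂ)‖ * r ^ n := by
  lift r to NNReal using hr₀
  have h := FormalMultilinearSeries.summable_norm_mul_pow _
    ((ENNReal.coe_lt_one_iff.2 hr).trans_le (hasFPowerSeriesOnBall_one_sub_cpow_neg a).r_le)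
  simpa [FormalMultilinearSeries.ofScalars_norm] using h

theorem summable_abs_ascPochhammer_div_factorial_mul_pow (q : ℝ) {s : ℝ} (hs : |s| < 1) :
    Summable fun k : ℕ ↦ |(ascPochhammer ℝ k).eval q / k ! * s ^ k| := by
  refine (summable_norm_ascPochhammer_div_factorial_mul_pow q (abs_nonneg s) hs).congr fun k ↦ ?_
  rw [ascPochhammer_eval_ofReal, abs_mul, abs_pow, norm_div, norm_real, Real.norm_eq_abs,
    norm_natCast, abs_div, Nat.abs_cast]

theorem Complex.norm_one_sub_ofReal_mul_exp_sq (s θ : ℝ) :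
    ‖1 - s * exp (θ * I)‖ ^ 2 = 1 - 2 * s * Real.cos θ + s ^ 2 := by
  rw [Complex.sq_norm, normSq_apply]
  simp only [sub_re, sub_im, one_re, one_im, re_ofReal_mul, im_ofReal_mul, exp_ofReal_mul_I_re,
    exp_ofReal_mul_I_im]
  nlinarith [Real.sin_sq_add_cos_sq θ]

theorem norm_tsum_ascPochhammer_mul_exp_sq (q : ℝ) {s : ℝ} (hs : |s| < 1) (θ : ℝ) :
    ‖∑' k : ℕ, (((ascPochhammer ℝ k).eval q / k ! * s ^ k : ℝ) : ℂ) * exp (k * θ * I)‖ ^ 2 =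
      (1 - 2 * s * Real.cos θ + s ^ 2) ^ (-q) := by
  have hw : ‖(s : ℂ) * exp (θ * I)‖ < 1 := by simpa [norm_exp_ofReal_mul_I] using hs
  have hterm (k : ℕ) : (((ascPochhammer ℝ k).eval q / k ! * s ^ k : ℝ) : ℂ) * exp (k * θ * I) =
      (ascPochhammer ℂ k).eval (q : ℂ) / k ! * ((s : ℂ) * exp (θ * I)) ^ k := by
    rw [ascPochhammer_eval_ofReal, mul_pow, ← exp_nat_mul]
    push_cast
    ring_nf
  simp_rw [hterm, (hasSum_ascPochhammer_div_factorial_mul_pow q hw).tsum_eq, ← ofReal_neg,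
    norm_cpow_real, ← norm_one_sub_ofReal_mul_exp_sq, Real.rpow_pow_comm (norm_nonneg _)]

theorem integral_cos_natCast_sub_mul (m n : ℕ) :
    ∫ θ in (0 : ℝ)..Real.pi, Real.cos ((m - n : ℝ) * θ) = if m = n then Real.pi else 0 := by
  split_ifs with h
  · simp [h]
  · have hmn : (m - n : ℝ) ≠ 0 := sub_ne_zero.2 (by exact_mod_cast h)
    have hsin := Real.sin_int_mul_pi (m - n)
    push_cast at hsin
    simp [intervalIntegral.integral_comp_mul_left (fun y ↦ Real.cos y) hmn, hsin]

theorem Complex.ofReal_mul_exp_mul_conj (a b : ℝ) (m n : ℕ) (θ : ℝ) :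
    (a : ℂ) * exp (m * θ * I) * conj ((b : ℂ) * exp (n * θ * I)) =
      ((a * b : ℝ) : ℂ) * exp (((m - n : ℝ) * θ : ℝ) * I) := by
  simp only [map_mul, conj_ofReal, ← exp_conj, conj_I, map_natCast]
  push_cast
  rw [mul_mul_mul_comm, ← exp_add]
  ring_nf

theorem hasSum_norm_tsum_mul_exp_sq {γ : ℕ → ℝ} (hγ : Summable fun k ↦ |γ k|) (θ : ℝ) :
    HasSum (fun p : ℕ × ℕ ↦ γ p.1 * γ p.2 * Real.cos ((p.1 - p.2 : ℝ) * θ))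
      (‖∑' k : ℕ, (γ k : ℂ) * exp (k * θ * I)‖ ^ 2) := by
  have he : Summable fun k : ℕ ↦ ‖(γ k : ℂ) * exp (k * θ * I)‖ := by simpa [norm_exp] using hγ
  have he' : Summable fun k : ℕ ↦ ‖conj ((γ k : ℂ) * exp (k * θ * I))‖ := by simpa using he
  have hprod := summable_mul_of_summable_norm he he'
  have h := hasSum_re (he.of_norm.hasSum.mul he'.of_norm.hasSum hprod)
  rw [← conj_tsum, mul_conj, ofReal_re, ← Complex.sq_norm] at h
  convert h using 2 with p
  rw [ofReal_mul_exp_mul_conj, re_ofReal_mul, exp_ofReal_mul_I_re]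

/-- Parseval's identity on a half period: for real coefficients `|f|²` is even in `θ`. -/
theorem hasSum_sq_integral_norm_tsum_mul_exp_sq {γ : ℕ → ℝ} (hγ : Summable fun k ↦ |γ k|) :
    HasSum (fun k ↦ γ k ^ 2)
      (1 / Real.pi * ∫ θ in (0 : ℝ)..Real.pi, ‖∑' k : ℕ, (γ k : ℂ) * exp (k * θ * I)‖ ^ 2) := by
  have hγγ : Summable fun p : ℕ × ℕ ↦ |γ p.1| * |γ p.2| :=
    summable_mul_of_summable_norm (f := fun k ↦ |γ k|) (g := fun k ↦ |γ k|)
      (by simpa using hγ) (by simpa using hγ)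
  have termwise := intervalIntegral.hasSum_integral_of_dominated_convergence
    (μ := volume) (a := 0) (b := Real.pi)
    (F := fun (p : ℕ × ℕ) θ ↦ γ p.1 * γ p.2 * Real.cos ((p.1 - p.2 : ℝ) * θ))
    (fun p _ ↦ |γ p.1| * |γ p.2|) (fun p ↦ (by fun_prop : Continuous _).aestronglyMeasurable)
    (fun p ↦ ae_of_all _ fun θ _ ↦ by
      simpa [abs_mul] using mul_le_mul_of_nonneg_left (Real.abs_cos_le_one _)
        (abs_nonneg (γ p.1 * γ p.2)))
    (ae_of_all _ fun _ _ ↦ hγγ) intervalIntegrable_const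
    (ae_of_all _ fun θ _ ↦ hasSum_norm_tsum_mul_exp_sq hγ θ)
  simp only [intervalIntegral.integral_const_mul, integral_cos_natCast_sub_mul] at termwise
  rw [← Function.Injective.hasSum_iff (g := fun k : ℕ ↦ (k, k))
    (fun a b h ↦ congrArg Prod.fst h)] at termwise
  · have hdiag : (fun k ↦ γ k ^ 2) = fun k ↦ 1 / Real.pi * (γ k * γ k * Real.pi) := by
      field_simp
    simpa [hdiag] using termwise.mul_left (1 / Real.pi)
  · rintro ⟨m, n⟩ hmn
    rw [if_neg fun h ↦ hmn ⟨m, by simp_all⟩, mul_zero]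

theorem one_sub_four_mul_sin_half_sq {x : ℝ} (hx : x ≠ 1) (θ : ℝ) :
    1 - 4 * x * (1 - x) * Real.sin (θ / 2) ^ 2 =
      (1 - x) ^ 2 * (1 - 2 * (x / (x - 1)) * Real.cos θ + (x / (x - 1)) ^ 2) := by
  have hx' : x - 1 ≠ 0 := sub_ne_zero.2 hx
  have hcos := Real.cos_two_mul_eq_one_sub (θ / 2)
  rw [mul_div_cancel₀ θ two_ne_zero] at hcos
  rw [hcos]
  field_simp
  ring

end

theorem stmt4 (q x : ℝ) (hx : x ∈ Set.Ioo (0 : ℝ) (1 / 2)) :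
    ∃ S : ℝ,
      HasSum
        (fun k : ℕ =>
          ((ascPochhammer ℝ k).eval q) ^ 2 / ((k.factorial : ℝ)) ^ 2 *
            (x / (x - 1)) ^ (2 * k)) S ∧
      (1 - x) ^ (-(2 * q)) * S =
        1 / Real.pi *
          ∫ φ in (0 : ℝ)..Real.pi,
            (1 - 4 * x * (1 - x) * Real.sin (φ / 2) ^ 2) ^ (-q) := by
  obtain ⟨hx₀, hx₁⟩ := hx
  have hs : |x / (x - 1)| < 1 := by
    rw [abs_div, abs_of_pos hx₀, abs_of_neg (by linarith), div_lt_one (by linarith)]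
    linarith
  have parseval := hasSum_sq_integral_norm_tsum_mul_exp_sq
    (summable_abs_ascPochhammer_div_factorial_mul_pow q hs)
  refine ⟨_, parseval.congr_fun fun k ↦ by ring, ?_⟩
  have integrand (φ : ℝ) : (1 - 4 * x * (1 - x) * Real.sin (φ / 2) ^ 2) ^ (-q) =
      (1 - x) ^ (-(2 * q)) * ‖∑' k : ℕ, (((ascPochhammer ℝ k).eval q / k.factorial *
        (x / (x - 1)) ^ k : ℝ) : ℂ) * Complex.exp (k * φ * Complex.I)‖ ^ 2 := by
    rw [one_sub_four_mul_sin_half_sq (by linarith), norm_tsum_ascPochhammer_mul_exp_sq q hs,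
      Real.mul_rpow (sq_nonneg _) (Complex.norm_one_sub_ofReal_mul_exp_sq _ φ ▸ sq_nonneg _),
      ← Real.rpow_natCast_mul (by linarith)]
    push_cast
    ring_nf
  simp_rw [integrand, intervalIntegral.integral_const_mul]
  exact mul_left_comm _ _ _
end

section
/- For every natural number n ≥ 0 and every real x with x ≠ 1/2 and x ≠ 1, the identity (1−x)^{2n} · Σ_{k=0}^{n} ( ((−n)_k)² / (k!)² ) · ( x/(x−1) )^{2k} = (1−2x)^{n} · Σ_{k=0}^{n} ( (−n)_k·(1+n)_k / (k!)² ) · ( x²/(2x−1) )^{k} holds, where (a)_k = a(a+1)⋯(a+k−1) is the ascending Pochhammer symbol. -/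
/-!
Write `a = 1 - x`, so that `(x / (x - 1))² = x² / a²` and `a² = x² + (1 - 2x)`. With
`(-n)_k = (-1)^k k! C(n,k)` and `(1+n)_k = k! C(n+k,k)`, the left side becomes
`∑ C(n,k)² y^k (y + w)^(n-k)` and the right side `∑ C(n,j) C(n+j,j) y^j w^(n-j)`, where `y = x²` and
`w = 1 - 2x`. These agree as polynomials in `y, w`: expanding `(y + w)^(n-k)` binomially, the
coefficient of `y^j w^(n-j)` is `∑_k C(n,k)² C(n-k,j-k) = C(n,j) ∑_k C(n,k) C(j,k)`, which is
`C(n,j) C(n+j,j)` by Vandermonde's identity.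
-/

open Finset Nat

theorem Nat.sum_range_choose_mul_choose (n j : ℕ) :
    ∑ k ∈ range (j + 1), n.choose k * j.choose k = (n + j).choose j := by
  rw [add_choose_eq, sum_antidiagonal_eq_sum_range_succ_mk]
  refine sum_congr rfl fun k hk => ?_
  rw [choose_symm (mem_range_succ_iff.mp hk)]

theorem Nat.sum_range_choose_sq_mul_choose_sub (n j : ℕ) :
    ∑ k ∈ range (j + 1), n.choose k ^ 2 * (n - k).choose (j - k)
      = n.choose j * (n + j).choose j := by
  rw [← sum_range_choose_mul_choose, mul_sum]
  refine sum_congr rfl fun k hk => ?_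
  rw [sq, mul_assoc, ← choose_mul (mem_range_succ_iff.mp hk)]
  ring

theorem sum_choose_sq_mul_pow_mul_add_pow {R : Type*} [CommSemiring R] (n : ℕ) (y w : R) :
    ∑ k ∈ range (n + 1), ((n.choose k ^ 2 : ℕ) : R) * y ^ k * (y + w) ^ (n - k)
      = ∑ j ∈ range (n + 1), ((n.choose j * (n + j).choose j : ℕ) : R) * y ^ j * w ^ (n - j) := by
  have expand (k : ℕ) (hk : k ≤ n) : y ^ k * (y + w) ^ (n - k)
      = ∑ j ∈ Ico k (n + 1), ((n - k).choose (j - k) : R) * (y ^ j * w ^ (n - j)) := by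
    rw [add_pow, mul_sum, sum_Ico_eq_sum_range, show n + 1 - k = n - k + 1 by omega]
    refine sum_congr rfl fun i _ => ?_
    rw [Nat.add_sub_cancel_left, pow_add, Nat.sub_sub]
    ring
  calc _ = ∑ k ∈ range (n + 1), ∑ j ∈ Ico k (n + 1),
        ((n.choose k ^ 2 * (n - k).choose (j - k) : ℕ) : R) * (y ^ j * w ^ (n - j)) := by
        refine sum_congr rfl fun k hk => ?_
        rw [mul_assoc, expand k (mem_range_succ_iff.mp hk), mul_sum]
        refine sum_congr rfl fun j _ => ?_
        push_cast
        ring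
    _ = ∑ j ∈ range (n + 1), ∑ k ∈ range (j + 1),
        ((n.choose k ^ 2 * (n - k).choose (j - k) : ℕ) : R) * (y ^ j * w ^ (n - j)) :=
        sum_comm' fun k j => by simp only [mem_range, mem_Ico]; omega
    _ = _ := by
        refine sum_congr rfl fun j _ => ?_
        rw [← sum_mul, ← Nat.cast_sum, Nat.sum_range_choose_sq_mul_choose_sub, mul_assoc]

theorem ascPochhammer_eval_neg_natCast {R : Type*} [Ring R] (n k : ℕ) :
    (ascPochhammer R k).eval (-(n : R)) = (-1) ^ k * ((k ! * n.choose k : ℕ) : R) := by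
  rw [ascPochhammer_eval_neg_eq_descPochhammer, descPochhammer_eval_eq_descFactorial,
    descFactorial_eq_factorial_mul_choose]

theorem ascPochhammer_eval_one_add_natCast {R : Type*} [Semiring R] (n k : ℕ) :
    (ascPochhammer R k).eval (1 + (n : R)) = ((k ! * (n + k).choose k : ℕ) : R) := by
  rw [add_comm, ← Nat.cast_add_one, ascPochhammer_nat_eq_natCast_ascFactorial,
    ascFactorial_eq_factorial_mul_choose]

theorem pow_mul_div_pow_of_le {K : Type*} [CommGroupWithZero K] {a : K} (b : K) (ha : a ≠ 0)
    {k n : ℕ} (h : k ≤ n) : a ^ n * (b / a) ^ k = b ^ k * a ^ (n - k) := by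
  obtain ⟨m, rfl⟩ := exists_add_of_le h
  rw [Nat.add_sub_cancel_left, pow_add, div_pow]
  field_simp

theorem stmt5 (n : ℕ) (x : ℝ) (hx2 : x ≠ 1 / 2) (hx1 : x ≠ 1) :
    (1 - x) ^ (2 * n) *
        ∑ k ∈ Finset.range (n + 1),
          ((ascPochhammer ℝ k).eval (-(n : ℝ))) ^ 2 / ((k.factorial : ℝ)) ^ 2 *
            (x / (x - 1)) ^ (2 * k) =
      (1 - 2 * x) ^ n *
        ∑ k ∈ Finset.range (n + 1),
          ((ascPochhammer ℝ k).eval (-(n : ℝ)) * (ascPochhammer ℝ k).eval (1 + (n : ℝ))) /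
              ((k.factorial : ℝ)) ^ 2 *
            (x ^ 2 / (2 * x - 1)) ^ k := by
  have ha : (1 - x) ^ 2 ≠ 0 := pow_ne_zero 2 (sub_ne_zero.mpr hx1.symm)
  have hw : 1 - 2 * x ≠ 0 := by
    contrapose! hx2
    linarith
  simp only [ascPochhammer_eval_neg_natCast, ascPochhammer_eval_one_add_natCast, mul_sum]
  calc _ = ∑ k ∈ range (n + 1),
        ((n.choose k ^ 2 : ℕ) : ℝ) * (x ^ 2) ^ k * (x ^ 2 + (1 - 2 * x)) ^ (n - k) := by
        refine sum_congr rfl fun k hk => ?_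
        have hx : (x / (x - 1)) ^ 2 = x ^ 2 / (1 - x) ^ 2 := by
          rw [div_pow, ← neg_sub, neg_sq]
        rw [show x ^ 2 + (1 - 2 * x) = (1 - x) ^ 2 by ring, mul_assoc,
          ← pow_mul_div_pow_of_le _ ha (mem_range_succ_iff.mp hk), pow_mul, pow_mul, hx,
          mul_pow, pow_right_comm (-1 : ℝ) k 2, neg_one_sq, one_pow, one_mul]
        push_cast
        field_simp
    _ = _ := sum_choose_sq_mul_pow_mul_add_pow n (x ^ 2) (1 - 2 * x)
    _ = _ := by
        refine sum_congr rfl fun k hk => ?_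
        rw [mul_assoc, ← pow_mul_div_pow_of_le _ hw (mem_range_succ_iff.mp hk),
          show 1 - 2 * x = -(2 * x - 1) by ring, div_neg, neg_pow (_ / _)]
        push_cast
        field_simp
end

section
/- For every natural number n ≥ 1 and every real x ∈ [0, 1/2), the series G_n(−x) := Σ_{k=0}^{∞} ( C(n+k−1,k)·(−x)^k·(1−x)^{−n−k} )² converges and equals (1−2x)^{1−2n} · F_{n−1}(x), where F_{n−1}(x) := Σ_{k=0}^{n−1} ( C(n−1,k)·x^k·(1−x)^{n−1−k} )². -/
/-!
Put `n = N + 1` and `y = (x / (1 - x))²`. Then the `k`-th term of the series is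
`(1 - x)^(-2n) C(N+k, N)² y^k`, while `F_N(x) = (1 - x)^(2N) ∑ₖ C(N, k)² y^k` and
`1 - y = (1 - 2x) / (1 - x)²`. So the theorem is the generating-function identity
`∑ₘ C(N+m, N)² y^m = (∑ₖ C(N, k)² y^k) / (1 - y)^(2N+1)`: the right side is the Cauchy
product of a polynomial with the negative binomial series `∑ⱼ C(j+2N, 2N) y^j`, and comparing
coefficients is Li Shanlan's identity `∑ₖ C(N, k)² C(m-k+2N, 2N) = C(N+m, N)²`.
-/

open Finset

namespace Nat

theorem add_choose_eq_sum_range (m n k : ℕ) :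
    (m + n).choose k = ∑ i ∈ range (k + 1), m.choose i * n.choose (k - i) := by
  rw [add_choose_eq, Finset.Nat.sum_antidiagonal_eq_sum_range_succ_mk]

theorem sum_range_choose_sq_mul_choose (N t : ℕ) :
    ∑ r ∈ range (N + 1), N.choose r ^ 2 * r.choose t = N.choose t * (2 * N - t).choose N := by
  rcases le_or_gt t N with htN | hNt
  swap
  · rw [choose_eq_zero_of_lt hNt, zero_mul]
    refine sum_eq_zero fun r hr => ?_
    rw [choose_eq_zero_of_lt (n := r) (by simp at hr; omega), mul_zero]
  obtain ⟨M, rfl⟩ := exists_add_of_le htN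
  have hlow : ∀ r ∈ range t, (t + M).choose r ^ 2 * r.choose t = 0 := fun r hr => by
    rw [choose_eq_zero_of_lt (n := r) (mem_range.mp hr), mul_zero]
  have hhigh : ∀ u ∈ range (M + 1), (t + M).choose (t + u) ^ 2 * (t + u).choose t
      = (t + M).choose t * (M.choose u * (t + M).choose (M - u)) := fun u hu => by
    rw [sq, mul_assoc, choose_mul (by omega),
      choose_symm_of_eq_add (by simp at hu; omega : t + M = (t + u) + (M - u))]
    simp only [Nat.add_sub_cancel_left]
    ring
  rw [show t + M + 1 = t + (M + 1) by ring, sum_range_add, sum_eq_zero hlow, zero_add,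
    sum_congr rfl hhigh, ← mul_sum, ← add_choose_eq_sum_range,
    choose_symm_of_eq_add (by omega : 2 * (t + M) - t = (t + M) + M),
    show 2 * (t + M) - t = M + (t + M) by omega]

theorem choose_mul_choose_two_mul_sub (N m t : ℕ) :
    N.choose t * ((2 * N - t).choose N * (N + m).choose (2 * N - t))
      = (N + m).choose N * (N.choose t * m.choose (N - t)) := by
  rcases le_or_gt t N with htN | hNt
  · rcases le_or_gt (2 * N - t) (N + m) with hle | hgt
    · have h := choose_mul (n := N + m) (k := 2 * N - t) (s := N) (by omega)
      rw [Nat.add_sub_cancel_left, show 2 * N - t - N = N - t by omega] at h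
      rw [mul_comm ((2 * N - t).choose N), h]
      ring
    · rw [choose_eq_zero_of_lt hgt, choose_eq_zero_of_lt (n := m) (by omega)]
      simp
  · simp [choose_eq_zero_of_lt hNt]

/-- Li Shanlan's identity; expand `C(N+m+r, 2N)` by Vandermonde and sum over `r` first. -/
theorem sum_range_choose_sq_mul_choose_add (N m : ℕ) :
    ∑ r ∈ range (N + 1), N.choose r ^ 2 * (N + m + r).choose (2 * N)
      = (N + m).choose N ^ 2 := by
  have vandermonde :
      ∑ t ∈ range (2 * N + 1), N.choose t * m.choose (N - t) = (N + m).choose N := by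
    rw [add_choose_eq_sum_range, show 2 * N + 1 = N + 1 + N by ring, sum_range_add,
      add_eq_left]
    exact sum_eq_zero fun t _ => by rw [choose_eq_zero_of_lt (by omega), zero_mul]
  calc ∑ r ∈ range (N + 1), N.choose r ^ 2 * (N + m + r).choose (2 * N)
      = ∑ t ∈ range (2 * N + 1),
          (∑ r ∈ range (N + 1), N.choose r ^ 2 * r.choose t) * (N + m).choose (2 * N - t) := by
        simp_rw [add_comm (N + m) _, add_choose_eq_sum_range _ (N + m), mul_sum, sum_mul, mul_assoc]
        exact sum_comm
    _ = ∑ t ∈ range (2 * N + 1), (N + m).choose N * (N.choose t * m.choose (N - t)) := by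
        simp only [sum_range_choose_sq_mul_choose, mul_assoc, choose_mul_choose_two_mul_sub]
    _ = (N + m).choose N ^ 2 := by rw [← mul_sum, vandermonde, sq]

theorem sum_range_choose_sq_mul_choose_sub_add (N m : ℕ) :
    ∑ i ∈ range (m + 1), N.choose i ^ 2 * (m - i + 2 * N).choose (2 * N)
      = (N + m).choose N ^ 2 := by
  set h : ℕ → ℕ := fun i => N.choose i ^ 2 * (2 * N + m - i).choose (2 * N)
  have h_vanish : ∀ i, min N m < i → h i = 0 := fun i hi => by
    rcases lt_or_ge N i with hNi | hiN
    · simp [h, choose_eq_zero_of_lt hNi]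
    · simp [h, choose_eq_zero_of_lt (show 2 * N + m - i < 2 * N by omega)]
  have h_trunc : ∀ k, min N m ≤ k →
      ∑ i ∈ range (k + 1), h i = ∑ i ∈ range (min N m + 1), h i :=
    fun k hk => (sum_subset (range_subset_range.mpr (by omega)) fun i hi hi' =>
      h_vanish i (by simp at hi'; omega)).symm
  calc ∑ i ∈ range (m + 1), N.choose i ^ 2 * (m - i + 2 * N).choose (2 * N)
      = ∑ i ∈ range (m + 1), h i :=
        sum_congr rfl fun i hi => by simp only [h]; congr 3; simp at hi; omega
    _ = ∑ i ∈ range (N + 1), h i := by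
        rw [h_trunc m (min_le_right _ _), h_trunc N (min_le_left _ _)]
    _ = ∑ r ∈ range (N + 1), N.choose r ^ 2 * (N + m + r).choose (2 * N) := by
        rw [← sum_range_reflect]
        refine sum_congr rfl fun i hi => ?_
        have hi : i ≤ N := mem_range_succ_iff.mp hi
        simp only [h, Nat.add_sub_cancel, choose_symm hi]
        congr 2
        omega
    _ = (N + m).choose N ^ 2 := sum_range_choose_sq_mul_choose_add N m

end Nat

theorem hasSum_choose_add_sq_mul_pow (N : ℕ) {y : ℝ} (hy : |y| < 1) :
    HasSum (fun m : ℕ => ((N + m).choose N : ℝ) ^ 2 * y ^ m)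
      ((∑ k ∈ range (N + 1), (N.choose k : ℝ) ^ 2 * y ^ k) / (1 - y) ^ (2 * N + 1)) := by
  set f : ℕ → ℝ := fun k => (N.choose k : ℝ) ^ 2 * y ^ k
  set g : ℕ → ℝ := fun j => ((j + 2 * N).choose (2 * N) : ℝ) * y ^ j
  have hf_zero : ∀ k ∉ range (N + 1), f k = 0 := fun k hk => by
    simp [f, Nat.choose_eq_zero_of_lt (n := N) (by simpa using hk)]
  have hf : Summable fun k => ‖f k‖ :=
    summable_of_ne_finset_zero (s := range (N + 1)) fun k hk => by simp [hf_zero k hk]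
  have hg : HasSum g (1 / (1 - y) ^ (2 * N + 1)) :=
    hasSum_choose_mul_geometric_of_norm_lt_one (2 * N) hy
  have hg_norm : Summable fun j => ‖g j‖ := by
    refine (hasSum_choose_mul_geometric_of_norm_lt_one (2 * N) (r := |y|) (by simpa)).summable.congr
      fun j => ?_
    simp [g]
  have cauchy := hasSum_sum_range_mul_of_summable_norm hf hg_norm
  rw [tsum_eq_sum hf_zero, hg.tsum_eq, mul_one_div] at cauchy
  refine cauchy.congr_fun fun m => ?_
  calc ((N + m).choose N : ℝ) ^ 2 * y ^ m
      = ((∑ k ∈ range (m + 1), N.choose k ^ 2 * (m - k + 2 * N).choose (2 * N) : ℕ) : ℝ)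
          * y ^ m := by
        rw [Nat.sum_range_choose_sq_mul_choose_sub_add]; push_cast; ring
    _ = ∑ k ∈ range (m + 1), f k * g (m - k) := by
        rw [Nat.cast_sum, sum_mul]
        refine sum_congr rfl fun k hk => ?_
        rw [← pow_mul_pow_sub y (mem_range_succ_iff.mp hk)]
        push_cast
        ring

theorem bernsteinF_eq_mul_sum {x : ℝ} (hx : x ≠ 1) (N : ℕ) :
    bernsteinF N x
      = (1 - x) ^ (2 * N)
          * ∑ k ∈ range (N + 1), (N.choose k : ℝ) ^ 2 * ((x / (1 - x)) ^ 2) ^ k := by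
  have h1x : 1 - x ≠ 0 := sub_ne_zero.mpr hx.symm
  rw [bernsteinF, mul_sum]
  refine sum_congr rfl fun k hk => ?_
  have hkN : k ≤ N := mem_range_succ_iff.mp hk
  rw [show 2 * N = 2 * (N - k) + 2 * k by omega, ← pow_mul, div_pow]
  field_simp
  ring

theorem baskakov_weight_neg_sq {x : ℝ} (hx : x ≠ 1) (N k : ℕ) :
    (((N + 1 + k - 1).choose k : ℝ) * (-x) ^ k
        * (1 - x) ^ (-((N + 1 : ℕ) : ℤ) - (k : ℤ))) ^ 2
      = ((1 - x) ^ (2 * N + 2))⁻¹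
          * (((N + k).choose N : ℝ) ^ 2 * ((x / (1 - x)) ^ 2) ^ k) := by
  have h1x : 1 - x ≠ 0 := sub_ne_zero.mpr hx.symm
  rw [show N + 1 + k - 1 = N + k by omega, Nat.choose_symm_add, mul_pow, mul_pow,
    pow_right_comm (-x), neg_sq, ← pow_mul x, ← pow_mul (x / (1 - x)), div_pow,
    show -((N + 1 : ℕ) : ℤ) - (k : ℤ) = -((N + 1 + k : ℕ) : ℤ) by push_cast; ring,
    zpow_neg, zpow_natCast]
  field_simp
  ring

theorem stmt6 (n : ℕ) (hn : 1 ≤ n) (x : ℝ) (hx : x ∈ Set.Ico (0 : ℝ) (1 / 2)) :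
    HasSum
      (fun k : ℕ =>
        (((n + k - 1).choose k : ℝ) * (-x) ^ k * (1 - x) ^ (-(n : ℤ) - (k : ℤ))) ^ 2)
      ((1 - 2 * x) ^ ((1 : ℤ) - 2 * (n : ℤ)) * bernsteinF (n - 1) x) := by
  obtain ⟨N, rfl⟩ : ∃ N, n = N + 1 := ⟨n - 1, by omega⟩
  have hx1 : x ≠ 1 := by linarith [hx.2]
  have h1x : 1 - x ≠ 0 := by linarith [hx.2]
  have h12x : 0 < 1 - 2 * x := by linarith [hx.2]
  set y := (x / (1 - x)) ^ 2 with hy_def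
  have one_sub_y : 1 - y = (1 - 2 * x) / (1 - x) ^ 2 := by
    rw [hy_def]; field_simp; ring
  have hy : |y| < 1 := by
    rw [abs_of_nonneg (sq_nonneg _)]
    linarith [show 0 < 1 - y by rw [one_sub_y]; positivity]
  have rhs_eq : (1 - 2 * x) ^ ((1 : ℤ) - 2 * ((N + 1 : ℕ) : ℤ)) * bernsteinF (N + 1 - 1) x
      = ((1 - x) ^ (2 * N + 2))⁻¹ *
          ((∑ k ∈ range (N + 1), (N.choose k : ℝ) ^ 2 * y ^ k) / (1 - y) ^ (2 * N + 1)) := by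
    rw [Nat.add_sub_cancel, bernsteinF_eq_mul_sum hx1, ← hy_def, one_sub_y, div_pow, ← pow_mul,
      show (1 : ℤ) - 2 * ((N + 1 : ℕ) : ℤ) = -((2 * N + 1 : ℕ) : ℤ) by push_cast; ring,
      zpow_neg, zpow_natCast]
    field_simp [h12x.ne']
    ring
  rw [rhs_eq]
  exact ((hasSum_choose_add_sq_mul_pow N hy).mul_left _).congr_fun (baskakov_weight_neg_sq hx1 N)
end

section
/- For every natural number n ≥ 0 and every real x ∈ (−1, 1) with x ≠ 0 (so that 1/(1−x) is defined and the series converges), the series J_n(x) := Σ_{k=0}^{∞} ( C(n+k,k)·x^k·(1−x)^{n+1} )² converges and equals ( (1−x)/(1+x) )^{2n+1} · F_n( 1/(1−x) ), where F_n(y) := Σ_{k=0}^{n} ( C(n,k)·y^k·(1−y)^{n−k} )². -/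
open Finset

namespace Nat

theorem add_choose_mul_choose (n k m : ℕ) :
    (n + k).choose n * k.choose m = (n + k).choose (n + m) * (n + m).choose n := by
  rcases le_or_gt m k with hmk | hkm
  · simpa using (choose_mul (n := n + k) (Nat.le_add_right n m)).symm
  · rw [choose_eq_zero_of_lt hkm, choose_eq_zero_of_lt (by omega : n + k < n + m)]
    simp

theorem choose_mul_choose_of_le {n j : ℕ} (a : ℕ) (hjn : j ≤ n) :
    n.choose j * j.choose a = n.choose a * (n - a).choose (n - j) := by
  rcases le_or_gt a j with haj | hja
  · rw [choose_mul haj, choose_symm_of_eq_add (by omega : n - a = (j - a) + (n - j))]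
  · rw [choose_eq_zero_of_lt hja, mul_zero]
    rcases le_or_gt a n with han | hna
    · rw [choose_eq_zero_of_lt (by omega : n - a < n - j), mul_zero]
    · rw [choose_eq_zero_of_lt hna, zero_mul]

theorem sum_range_choose_sq_mul_choose_s8 (n a : ℕ) :
    ∑ j ∈ range (n + 1), n.choose j ^ 2 * j.choose a = n.choose a * (n - a + n).choose n := by
  calc ∑ j ∈ range (n + 1), n.choose j ^ 2 * j.choose a
      = n.choose a * ∑ j ∈ range (n + 1), (n - a).choose (n - j) * n.choose j := by
        rw [mul_sum]
        refine sum_congr rfl fun j hj ↦ ?_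
        rw [sq, mul_assoc, choose_mul_choose_of_le a (mem_range_succ_iff.mp hj)]
        ring
    _ = n.choose a * (n - a + n).choose n := by
        rw [add_choose_eq_sum_range, ← sum_range_reflect]
        refine congrArg _ (sum_congr rfl fun j hj ↦ ?_)
        rw [add_tsub_cancel_right, tsub_tsub_cancel_of_le (mem_range_succ_iff.mp hj), mul_comm]

theorem add_choose_sq_eq_sum (n k : ℕ) :
    (n + k).choose n ^ 2 = ∑ j ∈ range (n + 1), n.choose j ^ 2 * (n + k + j).choose (2 * n) := by
  have vandermonde_tail : ∀ j ∈ range (n + 1), (n + k + j).choose (2 * n)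
      = ∑ a ∈ range (n + 1), j.choose a * (n + k).choose (n + (n - a)) := by
    intro j hj
    rw [add_comm _ j, add_choose_eq_sum_range]
    refine (sum_subset (range_subset_range.2 (by omega)) fun a _ ha ↦ ?_).symm.trans
      (sum_congr rfl fun a ha ↦ ?_)
    · rw [choose_eq_zero_of_lt (by simp at hj ha; omega), zero_mul]
    · rw [show 2 * n - a = n + (n - a) by simp at ha; omega]
  calc (n + k).choose n ^ 2
      = ∑ a ∈ range (n + 1),
          n.choose a * ((n + k).choose (n + (n - a)) * (n + (n - a)).choose n) := by
        rw [sq]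
        nth_rw 2 [add_choose_eq_sum_range n k n]
        rw [mul_sum]
        refine sum_congr rfl fun a _ ↦ ?_
        rw [← add_choose_mul_choose]
        ring
    _ = ∑ a ∈ range (n + 1), ∑ j ∈ range (n + 1),
          n.choose j ^ 2 * (j.choose a * (n + k).choose (n + (n - a))) := by
        refine sum_congr rfl fun a _ ↦ ?_
        simp_rw [← mul_assoc]
        rw [← sum_mul, sum_range_choose_sq_mul_choose_s8, add_comm (n - a) n]
        ring
    _ = _ := by
        rw [sum_comm]
        refine sum_congr rfl fun j hj ↦ ?_
        rw [vandermonde_tail j hj, mul_sum]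

end Nat

section

variable {𝕜 : Type*} [NormedDivisionRing 𝕜] {t : 𝕜}

theorem hasSum_choose_add_mul_geometric {d m : ℕ} (hmd : m ≤ d) (ht : ‖t‖ < 1) :
    HasSum (fun k ↦ ((k + m).choose d : 𝕜) * t ^ k) (t ^ (d - m) / (1 - t) ^ (d + 1)) := by
  have initial_zero : ∑ i ∈ range (d - m), ((i + m).choose d : 𝕜) * t ^ i = 0 :=
    sum_eq_zero fun i hi ↦ by
      rw [Nat.choose_eq_zero_of_lt (by simp at hi; omega), Nat.cast_zero, zero_mul]
  have reindex : (fun k ↦ ((k + (d - m) + m).choose d : 𝕜) * t ^ (k + (d - m)))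
      = fun k ↦ t ^ (d - m) * (((k + d).choose d : 𝕜) * t ^ k) := funext fun k ↦ by
    rw [show k + (d - m) + m = k + d by omega, pow_add, ← pow_mul_comm, ← mul_assoc,
      (Nat.cast_commute _ _).eq, mul_assoc]
  have shifted : HasSum (fun k ↦ ((k + (d - m) + m).choose d : 𝕜) * t ^ (k + (d - m)))
      (t ^ (d - m) / (1 - t) ^ (d + 1) - ∑ i ∈ range (d - m), ((i + m).choose d : 𝕜) * t ^ i) := by
    rw [initial_zero, sub_zero, reindex, div_eq_mul_one_div (t ^ (d - m))]
    exact (hasSum_choose_mul_geometric_of_norm_lt_one d ht).mul_left _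
  exact (hasSum_nat_add_iff' (d - m)).mp shifted

theorem hasSum_add_choose_sq_mul_geometric (n : ℕ) (ht : ‖t‖ < 1) :
    HasSum (fun k ↦ ((n + k).choose n : 𝕜) ^ 2 * t ^ k)
      ((∑ j ∈ range (n + 1), (n.choose j : 𝕜) ^ 2 * t ^ (n - j)) / (1 - t) ^ (2 * n + 1)) := by
  simp_rw [← Nat.cast_pow, Nat.add_choose_sq_eq_sum, Nat.cast_sum, sum_mul, div_eq_mul_inv,
    sum_mul]
  refine hasSum_sum fun j hj ↦ ?_
  rw [mem_range] at hj
  have key := hasSum_choose_add_mul_geometric (by omega : n + j ≤ 2 * n) ht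
  rw [show 2 * n - (n + j) = n - j by omega, div_eq_mul_inv] at key
  simp_rw [show ∀ k, n + k + j = k + (n + j) from fun k ↦ by omega, Nat.cast_mul, Nat.cast_pow,
    mul_assoc]
  exact key.mul_left _

end

theorem bernsteinF_one_div_one_sub (n : ℕ) {x : ℝ} (hx : x ≠ 1) :
    bernsteinF n (1 / (1 - x))
      = (∑ j ∈ range (n + 1), (n.choose j : ℝ) ^ 2 * (x ^ 2) ^ (n - j)) / (1 - x) ^ (2 * n) := by
  rw [bernsteinF, sum_div]
  refine sum_congr rfl fun j hj ↦ ?_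
  obtain ⟨i, rfl⟩ := Nat.exists_eq_add_of_le (mem_range_succ_iff.mp hj)
  have hx' : 1 - x ≠ 0 := sub_ne_zero.2 hx.symm
  rw [add_tsub_cancel_left, mul_pow, mul_pow, pow_right_comm _ j, pow_right_comm _ i,
    show (1 - 1 / (1 - x)) ^ 2 = x ^ 2 / (1 - x) ^ 2 by field_simp; ring]
  simp only [div_pow, one_pow, ← pow_mul]
  field_simp
  ring

theorem stmt8_general (n : ℕ) (x : ℝ) (hx : x ∈ Set.Ioo (-1 : ℝ) 1) :
    HasSum
      (fun k : ℕ => (((n + k).choose k : ℝ) * x ^ k * (1 - x) ^ (n + 1)) ^ 2)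
      (((1 - x) / (1 + x)) ^ (2 * n + 1) * bernsteinF n (1 / (1 - x))) := by
  obtain ⟨hx_gt, hx_lt⟩ := hx
  have hx_sq : ‖x ^ 2‖ < 1 := by
    rw [norm_pow, Real.norm_eq_abs, sq_abs, sq_lt_one_iff_abs_lt_one]
    exact abs_lt.2 ⟨hx_gt, hx_lt⟩
  have series := (hasSum_add_choose_sq_mul_geometric n hx_sq).mul_left ((1 - x) ^ (2 * n + 2))
  have summand : (fun k : ℕ ↦ (((n + k).choose k : ℝ) * x ^ k * (1 - x) ^ (n + 1)) ^ 2)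
      = fun k ↦ (1 - x) ^ (2 * n + 2) * (((n + k).choose n : ℝ) ^ 2 * (x ^ 2) ^ k) :=
    funext fun k ↦ by rw [← Nat.choose_symm_add]; ring
  have value : ((1 - x) / (1 + x)) ^ (2 * n + 1) * bernsteinF n (1 / (1 - x))
      = (1 - x) ^ (2 * n + 2) * ((∑ j ∈ range (n + 1), (n.choose j : ℝ) ^ 2 * (x ^ 2) ^ (n - j))
          / (1 - x ^ 2) ^ (2 * n + 1)) := by
    have : 1 - x ≠ 0 := by linarith
    have : 1 + x ≠ 0 := by linarith
    rw [bernsteinF_one_div_one_sub n hx_lt.ne, show 1 - x ^ 2 = (1 - x) * (1 + x) by ring]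
    generalize ∑ j ∈ range (n + 1), (n.choose j : ℝ) ^ 2 * (x ^ 2) ^ (n - j) = S
    rw [mul_pow, div_pow]
    field_simp
    ring
  rw [summand, value]
  exact series

theorem stmt8 (n : ℕ) (x : ℝ) (hx : x ∈ Set.Ioo (-1 : ℝ) 1) (hx0 : x ≠ 0) :
    HasSum
      (fun k : ℕ => (((n + k).choose k : ℝ) * x ^ k * (1 - x) ^ (n + 1)) ^ 2)
      (((1 - x) / (1 + x)) ^ (2 * n + 1) * bernsteinF n (1 / (1 - x))) :=
  stmt8_general n x hx
end

section
/- For every natural number n ≥ 0 and every real x, F_n(x) = 4^{−n} · Σ_{j=0}^{n} 4^j · C(2j,j) · C(2n−2j,n−j) · (x−1/2)^{2j}, where F_n(x) := Σ_{k=0}^{n} ( C(n,k)·x^k·(1−x)^{n−k} )². -/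
open Finset Polynomial

namespace Nat

theorem mul_choose_succ_sq (n k : ℕ) :
    n * n.choose (k + 1) ^ 2 = n.choose k * n.choose (k + 1) + n.choose (k + 1) * n.choose (k + 2)
      + (n + 2) * n.choose k * n.choose (k + 2) := by
  rcases lt_or_ge k n with hkn | hnk
  · obtain ⟨s, rfl⟩ : ∃ s, n = k + 1 + s := ⟨n - (k + 1), by omega⟩
    have h₁ := choose_succ_right_eq (k + 1 + s) k
    have h₂ := choose_succ_right_eq (k + 1 + s) (k + 1)
    rw [show k + 1 + s - k = s + 1 by omega] at h₁
    rw [show k + 1 + s - (k + 1) = s by omega] at h₂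
    zify at h₁ h₂ ⊢
    linear_combination ((k + 1 + s).choose (k + 1) + (k + 1 + s).choose (k + 2) : ℤ) * h₁
      - ((k + 1 + s).choose (k + 1) + (k + 1 + s).choose k : ℤ) * h₂
  · simp [choose_eq_zero_of_lt (show n < k + 1 by omega),
      choose_eq_zero_of_lt (show n < k + 2 by omega)]

theorem choose_sq_recurrence (n k : ℕ) :
    (n + 2) * (n + 2).choose (k + 2) ^ 2 + (n + 1) * (n.choose k ^ 2 + n.choose (k + 2) ^ 2)
      = (2 * n + 3) * ((n + 1).choose (k + 1) ^ 2 + (n + 1).choose (k + 2) ^ 2)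
        + 2 * (n + 1) * n.choose (k + 1) ^ 2 := by
  have h := mul_choose_succ_sq n k
  simp only [choose_succ_succ' (n + 1), choose_succ_succ' n]
  zify at h ⊢
  linear_combination (-2 : ℤ) * h

theorem centralBinom_mul_recurrence (i j : ℕ) :
    (i + j + 2) * (i + 1).centralBinom * (j + 1).centralBinom
        + 16 * (i + j + 1) * i.centralBinom * j.centralBinom
      = 2 * (2 * (i + j) + 3)
          * ((i + 1).centralBinom * j.centralBinom + i.centralBinom * (j + 1).centralBinom) := by
  have h₁ := succ_mul_centralBinom_succ i
  have h₂ := succ_mul_centralBinom_succ j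
  zify at h₁ h₂ ⊢
  linear_combination ((j + 1).centralBinom - 4 * j.centralBinom : ℤ) * h₁
    + ((i + 1).centralBinom - 4 * i.centralBinom : ℤ) * h₂

end Nat

namespace Polynomial

variable {R : Type*} [CommSemiring R]

theorem homogenize_X_pow_mul {p : R[X]} {n : ℕ} (hp : p.natDegree ≤ n) (i j : ℕ) :
    (X ^ i * p).homogenize (i + j + n) =
      MvPolynomial.X 0 ^ i * MvPolynomial.X 1 ^ j * p.homogenize n := by
  rw [homogenize_mul _ _ ((natDegree_X_pow_le i).trans (Nat.le_add_right i j)) hp,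
    homogenize_X_pow (Nat.le_add_right i j), Nat.add_sub_cancel_left]

theorem eval_homogenize_eq_sum_antidiagonal (p : R[X]) (n : ℕ) (a b : R) :
    MvPolynomial.eval ![a, b] (p.homogenize n) =
      ∑ q ∈ antidiagonal n, p.coeff q.1 * a ^ q.1 * b ^ q.2 := by
  simp [homogenize, MvPolynomial.eval_monomial, mul_assoc]

end Polynomial

variable {R : Type*} [CommRing R]

variable (R) in
noncomputable def chooseSqPoly (n : ℕ) : R[X] :=
  ∑ k ∈ range (n + 1), C ((n.choose k : R) ^ 2) * X ^ k

@[simp]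
theorem coeff_chooseSqPoly (n k : ℕ) : (chooseSqPoly R n).coeff k = (n.choose k : R) ^ 2 := by
  simp only [chooseSqPoly, finsetSum_coeff, coeff_C_mul_X_pow]
  rw [Finset.sum_ite_eq]
  split_ifs with h
  · rfl
  · simp [Nat.choose_eq_zero_of_lt (by simpa using h : n < k)]

theorem natDegree_chooseSqPoly_le (n : ℕ) : (chooseSqPoly R n).natDegree ≤ n :=
  natDegree_sum_le_of_forall_le _ _ fun k hk ↦
    (natDegree_C_mul_X_pow_le _ k).trans (Nat.lt_succ_iff.mp (mem_range.mp hk))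

theorem chooseSqPoly_recurrence (n : ℕ) :
    (n + 2) • chooseSqPoly R (n + 2) + (n + 1) • (X ^ 2 * chooseSqPoly R n + chooseSqPoly R n)
      = (2 * n + 3) • (X * chooseSqPoly R (n + 1) + chooseSqPoly R (n + 1))
        + (2 * n + 2) • (X * chooseSqPoly R n) := by
  rw [sq (X : R[X]), mul_assoc]
  ext (_ | _ | k) <;>
    simp only [coeff_add, nsmul_eq_mul, coeff_natCast_mul, coeff_X_mul, coeff_X_mul_zero,
      coeff_chooseSqPoly, zero_add, Nat.choose_zero_right, Nat.choose_one_right]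
  · push_cast
    ring
  · push_cast
    ring
  · have h := congrArg (Nat.cast : ℕ → R) (Nat.choose_sq_recurrence n k)
    push_cast at h ⊢
    linear_combination h

theorem homogenize_chooseSqPoly_recurrence (n : ℕ) :
    (n + 2) • (chooseSqPoly R (n + 2)).homogenize (n + 2)
        + (n + 1) • ((MvPolynomial.X 0 ^ 2 + MvPolynomial.X 1 ^ 2)
          * (chooseSqPoly R n).homogenize n)
      = (2 * n + 3) • ((MvPolynomial.X 0 + MvPolynomial.X 1)
          * (chooseSqPoly R (n + 1)).homogenize (n + 1))
        + (2 * n + 2) • (MvPolynomial.X 0 * MvPolynomial.X 1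
          * (chooseSqPoly R n).homogenize n) := by
  have shift (i j m : ℕ) (h : i + j + m = n + 2) :
      (X ^ i * chooseSqPoly R m).homogenize (n + 2) =
        MvPolynomial.X 0 ^ i * MvPolynomial.X 1 ^ j * (chooseSqPoly R m).homogenize m :=
    h ▸ homogenize_X_pow_mul (natDegree_chooseSqPoly_le m) i j
  have h₂₀ : (X ^ 2 * chooseSqPoly R n).homogenize (n + 2) =
      MvPolynomial.X 0 ^ 2 * (chooseSqPoly R n).homogenize n := by
    simpa using shift 2 0 n (by omega)
  have h₀₂ : (chooseSqPoly R n).homogenize (n + 2) =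
      MvPolynomial.X 1 ^ 2 * (chooseSqPoly R n).homogenize n := by
    simpa using shift 0 2 n (by omega)
  have h₁₀ : (X * chooseSqPoly R (n + 1)).homogenize (n + 2) =
      MvPolynomial.X 0 * (chooseSqPoly R (n + 1)).homogenize (n + 1) := by
    simpa using shift 1 0 (n + 1) (by omega)
  have h₀₁ : (chooseSqPoly R (n + 1)).homogenize (n + 2) =
      MvPolynomial.X 1 * (chooseSqPoly R (n + 1)).homogenize (n + 1) := by
    simpa using shift 0 1 (n + 1) (by omega)
  have h₁₁ : (X * chooseSqPoly R n).homogenize (n + 2) =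
      MvPolynomial.X 0 * MvPolynomial.X 1 * (chooseSqPoly R n).homogenize n := by
    simpa using shift 1 1 n (by omega)
  have h := congrArg (homogenize · (n + 2)) (chooseSqPoly_recurrence (R := R) n)
  simp only [homogenize_add, homogenize_smul, h₂₀, h₀₂, h₁₀, h₀₁, h₁₁] at h
  rw [add_mul, add_mul]
  exact h

noncomputable def centralBinomConv (n : ℕ) (a b : R) : R :=
  ∑ p ∈ antidiagonal n, (p.1.centralBinom : R) * p.2.centralBinom * a ^ p.1 * b ^ p.2

theorem centralBinomConv_add_two (n : ℕ) (a b : R) :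
    centralBinomConv (n + 2) a b = (n + 2).centralBinom * (a ^ (n + 2) + b ^ (n + 2))
      + ∑ p ∈ antidiagonal n,
          ((p.1 + 1).centralBinom : R) * (p.2 + 1).centralBinom
            * a ^ (p.1 + 1) * b ^ (p.2 + 1) := by
  rw [centralBinomConv, Nat.sum_antidiagonal_succ, Nat.sum_antidiagonal_succ']
  simp only [Nat.centralBinom_zero, Nat.cast_one, pow_zero, one_mul, mul_one]
  ring

theorem add_mul_centralBinomConv_succ (n : ℕ) (a b : R) :
    (a + b) * centralBinomConv (n + 1) a b = (n + 1).centralBinom * (a ^ (n + 2) + b ^ (n + 2))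
      + ∑ p ∈ antidiagonal n, ((p.1.centralBinom : R) * (p.2 + 1).centralBinom
          + (p.1 + 1).centralBinom * p.2.centralBinom) * a ^ (p.1 + 1) * b ^ (p.2 + 1) := by
  rw [add_mul]
  nth_rw 1 [centralBinomConv, Nat.sum_antidiagonal_succ']
  rw [centralBinomConv, Nat.sum_antidiagonal_succ]
  simp only [mul_add, mul_sum, Nat.centralBinom_zero, Nat.cast_one, pow_zero, one_mul, mul_one]
  rw [add_add_add_comm, ← sum_add_distrib]
  congr 1
  · ring
  · exact sum_congr rfl fun p _ ↦ by ring

theorem mul_mul_centralBinomConv (n : ℕ) (a b : R) :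
    a * b * centralBinomConv n a b = ∑ p ∈ antidiagonal n,
      (p.1.centralBinom : R) * p.2.centralBinom * a ^ (p.1 + 1) * b ^ (p.2 + 1) := by
  rw [centralBinomConv, mul_sum]
  exact sum_congr rfl fun p _ ↦ by ring

theorem centralBinomConv_recurrence (n : ℕ) (a b : R) :
    (n + 2) * centralBinomConv (n + 2) a b + 16 * (n + 1) * (a * b * centralBinomConv n a b)
      = 2 * (2 * n + 3) * ((a + b) * centralBinomConv (n + 1) a b) := by
  have boundary : (n + 2 : R) * (n + 2).centralBinom = 2 * (2 * n + 3) * (n + 1).centralBinom := by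
    have h := congrArg (Nat.cast : ℕ → R) (Nat.succ_mul_centralBinom_succ (n + 1))
    push_cast at h
    linear_combination h
  have interior : ∀ p ∈ antidiagonal n,
      (n + 2) * (((p.1 + 1).centralBinom : R) * (p.2 + 1).centralBinom
          * a ^ (p.1 + 1) * b ^ (p.2 + 1))
        + 16 * (n + 1) * ((p.1.centralBinom : R) * p.2.centralBinom * a ^ (p.1 + 1) * b ^ (p.2 + 1))
      = 2 * (2 * n + 3) * (((p.1.centralBinom : R) * (p.2 + 1).centralBinom
          + (p.1 + 1).centralBinom * p.2.centralBinom) * a ^ (p.1 + 1) * b ^ (p.2 + 1)) := by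
    rintro ⟨i, j⟩ h
    obtain rfl := HasAntidiagonal.mem_antidiagonal.mp h
    have h := congrArg (Nat.cast : ℕ → R) (Nat.centralBinom_mul_recurrence i j)
    push_cast at h ⊢
    linear_combination a ^ (i + 1) * b ^ (j + 1) * h
  have hsum := sum_congr rfl interior
  rw [sum_add_distrib, ← mul_sum, ← mul_sum, ← mul_sum] at hsum
  rw [centralBinomConv_add_two, mul_mul_centralBinomConv, add_mul_centralBinomConv_succ]
  linear_combination hsum + (a ^ (n + 2) + b ^ (n + 2)) * boundary

theorem four_pow_mul_eval_homogenize_chooseSqPoly [NoZeroDivisors R] [CharZero R]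
    (n : ℕ) (a b : R) :
    4 ^ n * MvPolynomial.eval ![a ^ 2, b ^ 2] ((chooseSqPoly R n).homogenize n) =
      centralBinomConv n ((a - b) ^ 2) ((a + b) ^ 2) := by
  induction n using Nat.twoStepInduction with
  | zero => simp [eval_homogenize_eq_sum_antidiagonal, centralBinomConv]
  | one =>
    simp only [eval_homogenize_eq_sum_antidiagonal, centralBinomConv, Nat.sum_antidiagonal_succ,
      HasAntidiagonal.antidiagonal_zero, sum_singleton, coeff_chooseSqPoly, Nat.reduceAdd,
      Nat.centralBinom_eq_two_mul_choose, Nat.choose_succ_self_right, Nat.choose_self,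
      Nat.choose_zero_right]
    push_cast
    ring
  | more n ih₀ ih₁ =>
    have hG := congrArg (MvPolynomial.eval ![a ^ 2, b ^ 2])
      (homogenize_chooseSqPoly_recurrence (R := R) n)
    simp only [nsmul_eq_mul, map_add, map_mul, map_pow, map_natCast, MvPolynomial.eval_X,
      Matrix.cons_val_zero, Matrix.cons_val_one, Matrix.cons_val_fin_one] at hG
    push_cast at hG
    have hE := centralBinomConv_recurrence n ((a - b) ^ 2) ((a + b) ^ 2)
    apply mul_left_cancel₀ (show (n + 2 : R) ≠ 0 by norm_cast)
    linear_combination 4 ^ (n + 2) * hG - hE - 16 * (n + 1) * (a ^ 2 - b ^ 2) ^ 2 * ih₀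
      + 4 * (2 * n + 3) * (a ^ 2 + b ^ 2) * ih₁

theorem bernsteinF_eq_eval_homogenize (n : ℕ) (x : ℝ) :
    bernsteinF n x = MvPolynomial.eval ![x ^ 2, (1 - x) ^ 2] ((chooseSqPoly ℝ n).homogenize n) := by
  rw [bernsteinF, eval_homogenize_eq_sum_antidiagonal, Nat.sum_antidiagonal_eq_sum_range_succ_mk]
  refine sum_congr rfl fun k _ ↦ ?_
  rw [coeff_chooseSqPoly, ← pow_mul, ← pow_mul]
  ring

theorem stmt10 (n : ℕ) (x : ℝ) :
    bernsteinF n x =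
      ((4 : ℝ) ^ n)⁻¹ *
        ∑ j ∈ Finset.range (n + 1),
          4 ^ j * ((2 * j).choose j : ℝ) * ((2 * n - 2 * j).choose (n - j) : ℝ) *
            (x - 1 / 2) ^ (2 * j) := by
  have hE : ∑ j ∈ range (n + 1),
        4 ^ j * ((2 * j).choose j : ℝ) * ((2 * n - 2 * j).choose (n - j) : ℝ)
          * (x - 1 / 2) ^ (2 * j)
      = centralBinomConv n ((x - (1 - x)) ^ 2) ((x + (1 - x)) ^ 2) := by
    rw [centralBinomConv, Nat.sum_antidiagonal_eq_sum_range_succ_mk]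
    refine sum_congr rfl fun j _ ↦ ?_
    rw [show (x - (1 - x)) ^ 2 = 4 * (x - 1 / 2) ^ 2 by ring, add_sub_cancel, one_pow, mul_pow,
      ← pow_mul, show 2 * n - 2 * j = 2 * (n - j) by omega, Nat.centralBinom_eq_two_mul_choose,
      Nat.centralBinom_eq_two_mul_choose]
    ring
  rw [bernsteinF_eq_eval_homogenize, hE, ← four_pow_mul_eval_homogenize_chooseSqPoly,
    inv_mul_cancel_left₀ (by positivity)]
end

section
/- For every natural number n ≥ 1 and every real x, the derivative of F_n satisfies F_n′(x) = 4·(2x−1)·4^{−n} · Σ_{j=0}^{n−1} 4^j · (j+1) · C(2j+2,j+1) · C(2n−2j−2,n−j−1) · (x−1/2)^{2j}, where F_n(x) := Σ_{k=0}^{n} ( C(n,k)·x^k·(1−x)^{n−k} )². -/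
/-!
With `a = x²` and `b = (1 - x)²` we have `F_n(x) = ∑_{i+j=n} C(n,i)² aⁱ bʲ`. This sequence and
`4⁻ⁿ ∑_{i+j=n} C(2i,i) C(2j,j) (2x-1)²ⁱ` both satisfy the Legendre-type recurrence
`(n+2) f(n+2) = (2n+3) α f(n+1) - (n+1) β f(n)` with `α = a + b`, `β = (a - b)²`, and they agree
for `n = 0, 1`; indeed both are the coefficients of `((1 - w) (1 - (2x-1)² w))^(-1/2)`.
Each recurrence is verified by weighting the summands with the indices: such a weight kills the
boundary term of a sum of degree `n + 1` and turns it into a sum of degree `n`, through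
`(i+1) C(n+1,i+1) = (n+1) C(n,i)` and `(i+1) C(2i+2,i+1) = 2 (2i+1) C(2i,i)`.
Differentiating the closed form termwise gives `F_n'`.
-/

open Finset Nat

section

variable {R : Type*} [CommRing R]

/-- The recurrence of the coefficients of `(1 - 2 α w + β w²)^(-1/2)`. -/
def IsLegendreRecurrence (α β : R) (f : ℕ → R) : Prop :=
  ∀ n : ℕ, (n + 2 : R) * f (n + 2) = (2 * n + 3) * α * f (n + 1) - (n + 1) * β * f n

theorem IsLegendreRecurrence.pow_mul {α β : R} {f : ℕ → R} (hf : IsLegendreRecurrence α β f)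
    (c : R) : IsLegendreRecurrence (c * α) (c ^ 2 * β) (fun n => c ^ n * f n) := by
  intro n
  linear_combination c ^ (n + 2) * hf n

theorem IsLegendreRecurrence.unique [IsDomain R] [CharZero R] {α β : R} {f g : ℕ → R}
    (hf : IsLegendreRecurrence α β f) (hg : IsLegendreRecurrence α β g)
    (h₀ : f 0 = g 0) (h₁ : f 1 = g 1) : f = g := by
  suffices h : ∀ n, f n = g n ∧ f (n + 1) = g (n + 1) from funext fun n => (h n).1
  intro n
  induction n with
  | zero => exact ⟨h₀, h₁⟩
  | succ n ih =>
    refine ⟨ih.2, mul_left_cancel₀ (by exact_mod_cast (n + 1).succ_ne_zero : (n + 2 : R) ≠ 0) ?_⟩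
    rw [hf, hg, ih.1, ih.2]

def sqChooseMoment (w : ℕ → ℕ → R) (n : ℕ) (a b : R) : R :=
  ∑ p ∈ antidiagonal n, w p.1 p.2 * (n.choose p.1 : R) ^ 2 * a ^ p.1 * b ^ p.2

theorem sqChooseMoment_succ_left (w : ℕ → ℕ → R) (n : ℕ) (a b : R) :
    sqChooseMoment (fun i j => (i : R) ^ 2 * w i j) (n + 1) a b
      = (n + 1) ^ 2 * a * sqChooseMoment (fun i j => w (i + 1) j) n a b := by
  rw [sqChooseMoment, Nat.sum_antidiagonal_succ, sqChooseMoment, mul_sum]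
  simp only [Nat.cast_zero, zero_pow two_ne_zero, zero_mul, zero_add]
  refine sum_congr rfl fun p _ => ?_
  have h := congrArg (Nat.cast : ℕ → R) (add_one_mul_choose_eq n p.1)
  push_cast at h ⊢
  linear_combination (-(w (p.1 + 1) p.2 * a ^ (p.1 + 1) * b ^ p.2) *
    ((n + 1) * n.choose p.1 + (n + 1).choose (p.1 + 1) * (p.1 + 1))) * h

theorem sqChooseMoment_succ_right (w : ℕ → ℕ → R) (n : ℕ) (a b : R) :
    sqChooseMoment (fun i j => (j : R) ^ 2 * w i j) (n + 1) a b
      = (n + 1) ^ 2 * b * sqChooseMoment (fun i j => w i (j + 1)) n a b := by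
  rw [sqChooseMoment, Nat.sum_antidiagonal_succ', sqChooseMoment, mul_sum]
  simp only [Nat.cast_zero, zero_pow two_ne_zero, zero_mul, zero_add]
  refine sum_congr rfl fun p hp => ?_
  have hj : n + 1 - p.1 = p.2 + 1 := by rw [HasAntidiagonal.mem_antidiagonal] at hp; omega
  have h := congrArg (Nat.cast : ℕ → R) (choose_mul_succ_eq n p.1)
  rw [hj] at h
  push_cast at h ⊢
  linear_combination (-w p.1 (p.2 + 1) * a ^ p.1 * b ^ (p.2 + 1) *
    ((n + 1) * n.choose p.1 + (n + 1).choose p.1 * (p.2 + 1))) * h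

theorem isLegendreRecurrence_sqChooseMoment [IsDomain R] [CharZero R] (a b : R) :
    IsLegendreRecurrence (a + b) ((a - b) ^ 2) (fun n => sqChooseMoment (fun _ _ => 1) n a b) := by
  intro n
  have ha := sqChooseMoment_succ_left (fun _ _ => (1 : R)) (n + 1) a b
  have hb := sqChooseMoment_succ_right (fun _ _ => (1 : R)) (n + 1) a b
  have haa := sqChooseMoment_succ_left (fun i _ => ((i : R) - 1) ^ 2) (n + 1) a b
  have hab := sqChooseMoment_succ_left (fun _ j => (j : R) ^ 2) (n + 1) a b
  have hbb := sqChooseMoment_succ_right (fun _ j => ((j : R) - 1) ^ 2) (n + 1) a b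
  have ha' := sqChooseMoment_succ_left (fun _ _ => (1 : R)) n a b
  have hb' := sqChooseMoment_succ_right (fun _ _ => (1 : R)) n a b
  simp only [mul_one, Nat.cast_add, Nat.cast_one, add_sub_cancel_right] at ha hb haa hab hbb ha' hb'
  -- all terms now live in degree `n + 2`, where the recurrence holds summand by summand
  have hdeg : ((n : R) + 2) ^ 3 * (n + 1) * sqChooseMoment (fun _ _ => 1) (n + 2) a b
      = (2 * n + 3) * (n + 1) * (sqChooseMoment (fun i _ => (i : R) ^ 2) (n + 1 + 1) a b
          + sqChooseMoment (fun _ j => (j : R) ^ 2) (n + 1 + 1) a b)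
        - (sqChooseMoment (fun i _ => (i : R) ^ 2 * ((i : R) - 1) ^ 2) (n + 1 + 1) a b
          - 2 * sqChooseMoment (fun i j => (i : R) ^ 2 * (j : R) ^ 2) (n + 1 + 1) a b
          + sqChooseMoment (fun _ j => (j : R) ^ 2 * ((j : R) - 1) ^ 2) (n + 1 + 1) a b) := by
    simp only [sqChooseMoment, mul_sum, ← sum_add_distrib, ← sum_sub_distrib]
    refine sum_congr rfl fun p hp => ?_
    rw [HasAntidiagonal.mem_antidiagonal] at hp
    have hn : (n : R) = p.1 + p.2 - 2 := by
      rw [eq_sub_iff_add_eq]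
      exact_mod_cast hp.symm
    rw [hn]
    ring
  refine mul_left_cancel₀ (by exact_mod_cast (by positivity : (n + 2) ^ 2 * (n + 1) ≠ 0) :
    ((n : R) + 2) ^ 2 * (n + 1) ≠ 0) ?_
  linear_combination hdeg + (2 * n + 3) * (n + 1) * (ha + hb) - haa + 2 * hab - hbb
    - (n + 2) ^ 2 * a * ha' + 2 * (n + 2) ^ 2 * a * hb' - (n + 2) ^ 2 * b * hb'

def centralBinomMoment (w : ℕ → ℕ → R) (n : ℕ) (u v : R) : R :=
  ∑ p ∈ antidiagonal n, w p.1 p.2 * (centralBinom p.1 : R) * centralBinom p.2 * u ^ p.1 * v ^ p.2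

theorem centralBinomMoment_succ_left (w : ℕ → ℕ → R) (n : ℕ) (u v : R) :
    centralBinomMoment (fun i j => (i : R) * w i j) (n + 1) u v
      = 4 * u * centralBinomMoment (fun i j => (i : R) * w (i + 1) j) n u v
        + 2 * u * centralBinomMoment (fun i j => w (i + 1) j) n u v := by
  rw [centralBinomMoment, Nat.sum_antidiagonal_succ]
  simp only [centralBinomMoment, Nat.cast_zero, zero_mul, zero_add, mul_sum, ← sum_add_distrib]
  refine sum_congr rfl fun p _ => ?_
  have h := congrArg (Nat.cast : ℕ → R) (succ_mul_centralBinom_succ p.1)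
  push_cast at h ⊢
  linear_combination (w (p.1 + 1) p.2 * centralBinom p.2 * u ^ (p.1 + 1) * v ^ p.2) * h

theorem centralBinomMoment_succ_right (w : ℕ → ℕ → R) (n : ℕ) (u v : R) :
    centralBinomMoment (fun i j => (j : R) * w i j) (n + 1) u v
      = 4 * v * centralBinomMoment (fun i j => (j : R) * w i (j + 1)) n u v
        + 2 * v * centralBinomMoment (fun i j => w i (j + 1)) n u v := by
  rw [centralBinomMoment, Nat.sum_antidiagonal_succ']
  simp only [centralBinomMoment, Nat.cast_zero, zero_mul, zero_add, mul_sum, ← sum_add_distrib]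
  refine sum_congr rfl fun p _ => ?_
  have h := congrArg (Nat.cast : ℕ → R) (succ_mul_centralBinom_succ p.2)
  push_cast at h ⊢
  linear_combination (w p.1 (p.2 + 1) * centralBinom p.1 * u ^ p.1 * v ^ (p.2 + 1)) * h

theorem centralBinomMoment_fst_add_snd (n : ℕ) (u v : R) :
    centralBinomMoment (fun i _ => (i : R)) n u v + centralBinomMoment (fun _ j => (j : R)) n u v
      = n * centralBinomMoment (fun _ _ => 1) n u v := by
  simp only [centralBinomMoment, mul_sum, ← sum_add_distrib]
  refine sum_congr rfl fun p hp => ?_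
  rw [← HasAntidiagonal.mem_antidiagonal.1 hp]
  push_cast
  ring

theorem isLegendreRecurrence_centralBinomMoment (u v : R) :
    IsLegendreRecurrence (2 * (u + v)) (16 * u * v)
      (fun n => centralBinomMoment (fun _ _ => 1) n u v) := by
  intro n
  have hu := centralBinomMoment_succ_left (fun _ _ => (1 : R)) (n + 1) u v
  have hv := centralBinomMoment_succ_right (fun _ _ => (1 : R)) (n + 1) u v
  have hu' := centralBinomMoment_succ_left (fun _ _ => (1 : R)) n u v
  have hv' := centralBinomMoment_succ_right (fun _ _ => (1 : R)) n u v
  have e₂ := centralBinomMoment_fst_add_snd (n + 2) u v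
  have e₁ := centralBinomMoment_fst_add_snd (n + 1) u v
  have e₀ := centralBinomMoment_fst_add_snd n u v
  simp only [mul_one] at hu hv hu' hv'
  push_cast at e₂ e₁
  linear_combination -e₂ + hu + hv + 4 * (u + v) * e₁ - 4 * v * hu' - 4 * u * hv' - 16 * u * v * e₀

theorem four_pow_mul_sqChooseMoment [IsDomain R] [CharZero R] (n : ℕ) (x y : R) :
    4 ^ n * sqChooseMoment (fun _ _ => 1) n (x ^ 2) (y ^ 2)
      = centralBinomMoment (fun _ _ => 1) n ((x - y) ^ 2) ((x + y) ^ 2) := by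
  have hS := (isLegendreRecurrence_sqChooseMoment (x ^ 2) (y ^ 2)).pow_mul 4
  have hQ := isLegendreRecurrence_centralBinomMoment ((x - y) ^ 2) ((x + y) ^ 2)
  rw [show 2 * ((x - y) ^ 2 + (x + y) ^ 2) = 4 * (x ^ 2 + y ^ 2) by ring,
    show 16 * (x - y) ^ 2 * (x + y) ^ 2 = 4 ^ 2 * (x ^ 2 - y ^ 2) ^ 2 by ring] at hQ
  refine congrFun (hS.unique hQ ?_ ?_) n <;>
    simp [sqChooseMoment, centralBinomMoment, Nat.sum_antidiagonal_succ,
      show centralBinom 1 = 2 from rfl]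
  ring

end

theorem bernsteinF_eq_sqChooseMoment (n : ℕ) (x : ℝ) :
    bernsteinF n x = sqChooseMoment (fun _ _ => 1) n (x ^ 2) ((1 - x) ^ 2) := by
  rw [bernsteinF, sqChooseMoment, Nat.sum_antidiagonal_eq_sum_range_succ_mk]
  refine sum_congr rfl fun k _ => ?_
  simp only [one_mul, mul_pow, ← pow_mul]
  ring

theorem bernsteinF_eq_sum_centralBinom (n : ℕ) (x : ℝ) :
    bernsteinF n x = (4 ^ n)⁻¹ *
      ∑ k ∈ range (n + 1), (centralBinom k : ℝ) * centralBinom (n - k) * (2 * x - 1) ^ (2 * k) := by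
  rw [eq_inv_mul_iff_mul_eq₀ (by positivity), bernsteinF_eq_sqChooseMoment,
    four_pow_mul_sqChooseMoment, centralBinomMoment, Nat.sum_antidiagonal_eq_sum_range_succ_mk]
  refine sum_congr rfl fun k _ => ?_
  rw [show x - (1 - x) = 2 * x - 1 by ring, add_sub_cancel, ← pow_mul]
  simp

theorem hasDerivAt_bernsteinF (n : ℕ) (x : ℝ) :
    HasDerivAt (bernsteinF n)
      (4 * (2 * x - 1) * (4 ^ n)⁻¹ * ∑ j ∈ range n,
        ((j : ℝ) + 1) * centralBinom (j + 1) * centralBinom (n - 1 - j) * (2 * x - 1) ^ (2 * j)) x := by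
  rw [funext (bernsteinF_eq_sum_centralBinom n)]
  have h : HasDerivAt (fun y : ℝ => (4 ^ n)⁻¹ *
      ∑ k ∈ range (n + 1), (centralBinom k : ℝ) * centralBinom (n - k) * (2 * y - 1) ^ (2 * k))
      ((4 ^ n)⁻¹ * ∑ k ∈ range (n + 1), (centralBinom k : ℝ) * centralBinom (n - k) *
        ((2 * k : ℕ) * (2 * x - 1) ^ (2 * k - 1) * (2 * 1))) x :=
    (HasDerivAt.fun_sum fun k _ =>
      ((((hasDerivAt_id x).const_mul 2).sub_const 1).pow (2 * k)).const_mul _).const_mul _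
  convert h using 1
  rw [sum_range_succ']
  simp only [mul_zero, Nat.cast_zero, zero_mul, add_zero]
  rw [mul_sum, mul_sum]
  refine sum_congr rfl fun j _ => ?_
  rw [show n - (j + 1) = n - 1 - j by omega, show 2 * (j + 1) - 1 = 2 * j + 1 by omega]
  push_cast
  ring

theorem stmt11_general (n : ℕ) (x : ℝ) :
    deriv (bernsteinF n) x =
      4 * (2 * x - 1) * ((4 : ℝ) ^ n)⁻¹ *
        ∑ j ∈ Finset.range n,
          4 ^ j * ((j : ℝ) + 1) * ((2 * j + 2).choose (j + 1) : ℝ) *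
            ((2 * n - 2 * j - 2).choose (n - j - 1) : ℝ) * (x - 1 / 2) ^ (2 * j) := by
  rw [(hasDerivAt_bernsteinF n x).deriv]
  congr 1
  refine sum_congr rfl fun j _ => ?_
  have h₁ : (2 * j + 2).choose (j + 1) = centralBinom (j + 1) :=
    (centralBinom_eq_two_mul_choose (j + 1)).symm
  have h₂ : (2 * n - 2 * j - 2).choose (n - j - 1) = centralBinom (n - 1 - j) := by
    rw [centralBinom_eq_two_mul_choose]
    congr 1 <;> omega
  have h₃ : (4 : ℝ) ^ j * (x - 1 / 2) ^ (2 * j) = (2 * x - 1) ^ (2 * j) := by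
    rw [pow_mul, pow_mul, ← mul_pow]
    ring
  rw [h₁, h₂]
  linear_combination -((j : ℝ) + 1) * centralBinom (j + 1) * centralBinom (n - 1 - j) * h₃

theorem stmt11 (n : ℕ) (hn : 1 ≤ n) (x : ℝ) :
    deriv (bernsteinF n) x =
      4 * (2 * x - 1) * ((4 : ℝ) ^ n)⁻¹ *
        ∑ j ∈ Finset.range n,
          4 ^ j * ((j : ℝ) + 1) * ((2 * j + 2).choose (j + 1) : ℝ) *
            ((2 * n - 2 * j - 2).choose (n - j - 1) : ℝ) * (x - 1 / 2) ^ (2 * j) :=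
  stmt11_general n x
end

section
/- For all natural numbers n ≥ 1 and j ≥ 0 and every real x, the j-th, (j+1)-st and (j+2)-nd derivatives of K_n satisfy x · K_n^{(j+2)}(x) + (4nx + j + 1) · K_n^{(j+1)}(x) + 2n(2j+1) · K_n^{(j)}(x) = 0, where K_n(x) := Σ_{k=0}^{∞} ( e^{−nx}·(nx)^k / k! )². -/
/-!
Write `K_n(x) = e^{-2nx} g(n²x²)` with `g(y) = ∑ y^k / (k!)²`. Termwise differentiation gives
`y g'' + g' = g`; the substitution `y = n²x²` turns this into `x f'' + f' = 4n²x f`, and the factor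
`e^{-2nx}` into the case `j = 0` of the claim. Differentiating that equation `j` times gives the
general case, since `(x u)' = x u' + u` and `((4nx + j + 1) u)' = (4nx + j + 1) u' + 4n u`.
-/

/-- `szaszK n x` is the sum of squares of the weights of the Szász–Mirakyan operator. -/
noncomputable def szaszK (n : ℕ) (x : ℝ) : ℝ :=
  ∑' k : ℕ, (Real.exp (-((n : ℝ) * x)) * ((n : ℝ) * x) ^ k / (k.factorial : ℝ)) ^ 2

open Nat Real
open scoped ContDiff

theorem contDiff_of_hasDerivAt_succ {𝕜 F : Type*} [NontriviallyNormedField 𝕜]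
    [NormedAddCommGroup F] [NormedSpace 𝕜 F] {f : ℕ → 𝕜 → F}
    (hf : ∀ m x, HasDerivAt (f m) (f (m + 1) x) x) : ContDiff 𝕜 ∞ (f 0) := by
  have hiter : ∀ m, iteratedDeriv m (f 0) = f m := by
    intro m
    induction m with
    | zero => exact iteratedDeriv_zero
    | succ m ih => rw [iteratedDeriv_succ, ih]; exact funext fun x => (hf m x).deriv
  exact contDiff_of_differentiable_iteratedDeriv fun m _ =>
    hiter m ▸ fun x => (hf m x).differentiableAt

theorem summable_pow_sub_div_factorial (R : ℝ) (m : ℕ) :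
    Summable fun k => R ^ (k - m) / (k - m)! := by
  rw [← summable_nat_add_iff m]
  simpa using Real.summable_pow_div_factorial R

/-- The `m`-th derivative of `y ↦ y ^ k / (k !) ^ 2`; the factor `k.descFactorial m` vanishes
for `k < m`, where `k - m` truncates. -/
noncomputable def sqFactorialTerm (m k : ℕ) (y : ℝ) : ℝ :=
  k.descFactorial m * y ^ (k - m) / (k ! : ℝ) ^ 2

noncomputable def sqFactorialSeries (m : ℕ) (y : ℝ) : ℝ :=
  ∑' k, sqFactorialTerm m k y

theorem sqFactorialTerm_of_le {m k : ℕ} (h : m ≤ k) (y : ℝ) :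
    sqFactorialTerm m k y = y ^ (k - m) / ((k - m)! * k !) := by
  have hfac : ((k - m)! : ℝ) * k.descFactorial m = k ! := mod_cast factorial_mul_descFactorial h
  have hk : (k ! : ℝ) ≠ 0 := by positivity
  have hkm : ((k - m)! : ℝ) ≠ 0 := by positivity
  rw [sqFactorialTerm, ← hfac]
  field_simp

theorem norm_sqFactorialTerm_le {m k : ℕ} {y R : ℝ} (hy : |y| ≤ R) :
    ‖sqFactorialTerm m k y‖ ≤ R ^ (k - m) / (k - m)! := by
  have hR : 0 ≤ R := (abs_nonneg y).trans hy
  rcases lt_or_ge k m with hkm | hmk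
  · simp [sqFactorialTerm, descFactorial_eq_zero_iff_lt.2 hkm]
    positivity
  · rw [sqFactorialTerm_of_le hmk, norm_div, norm_pow, norm_mul, Real.norm_eq_abs]
    calc |y| ^ (k - m) / (‖((k - m)! : ℝ)‖ * ‖(k ! : ℝ)‖)
        ≤ |y| ^ (k - m) / (k - m)! := by
          simp only [norm_natCast]
          gcongr
          exact le_mul_of_one_le_right (by positivity) (mod_cast factorial_pos k)
      _ ≤ R ^ (k - m) / (k - m)! := by gcongr

theorem summable_sqFactorialTerm (m : ℕ) (y : ℝ) : Summable fun k => sqFactorialTerm m k y :=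
  .of_norm_bounded (summable_pow_sub_div_factorial |y| m) fun _ => norm_sqFactorialTerm_le le_rfl

theorem hasDerivAt_sqFactorialTerm (m k : ℕ) (y : ℝ) :
    HasDerivAt (sqFactorialTerm m k) (sqFactorialTerm (m + 1) k y) y := by
  refine (((hasDerivAt_pow (k - m) y).const_mul (k.descFactorial m : ℝ)).div_const
    ((k ! : ℝ) ^ 2)).congr_deriv ?_
  rw [sqFactorialTerm, descFactorial_succ, ← Nat.sub_sub]
  push_cast
  ring

theorem hasDerivAt_sqFactorialSeries (m : ℕ) (y : ℝ) :
    HasDerivAt (sqFactorialSeries m) (sqFactorialSeries (m + 1) y) y := by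
  have hy : y ∈ Metric.ball (0 : ℝ) (|y| + 1) := by simp
  exact hasDerivAt_tsum_of_isPreconnected (summable_pow_sub_div_factorial (|y| + 1) (m + 1))
    Metric.isOpen_ball (convex_ball _ _).isPreconnected
    (fun k z _ => hasDerivAt_sqFactorialTerm m k z)
    (fun k z hz => norm_sqFactorialTerm_le (by simpa using (mem_ball_zero_iff.1 hz).le))
    hy (summable_sqFactorialTerm m y) hy

theorem deriv_sqFactorialSeries (m : ℕ) : deriv (sqFactorialSeries m) = sqFactorialSeries (m + 1) :=
  funext fun y => (hasDerivAt_sqFactorialSeries m y).deriv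

theorem differentiable_sqFactorialSeries (m : ℕ) : Differentiable ℝ (sqFactorialSeries m) :=
  fun y => (hasDerivAt_sqFactorialSeries m y).differentiableAt

theorem contDiff_sqFactorialSeries : ContDiff ℝ ∞ (sqFactorialSeries 0) :=
  contDiff_of_hasDerivAt_succ hasDerivAt_sqFactorialSeries

theorem contDiff_sqFactorialSeries_mul_sq (c : ℝ) :
    ContDiff ℝ ∞ fun x => sqFactorialSeries 0 (c * x ^ 2) :=
  contDiff_sqFactorialSeries.comp (contDiff_const.mul (contDiff_id.pow 2))

theorem sqFactorialTerm_succ_ode (k : ℕ) (y : ℝ) :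
    y * sqFactorialTerm 2 (k + 1) y + sqFactorialTerm 1 (k + 1) y = sqFactorialTerm 0 k y := by
  rcases k with _ | k
  · simp [sqFactorialTerm]
  · rw [sqFactorialTerm_of_le (by omega), sqFactorialTerm_of_le (by omega),
      sqFactorialTerm_of_le (by omega)]
    simp only [show k + 1 + 1 - 2 = k by omega, show k + 1 + 1 - 1 = k + 1 by omega, Nat.sub_zero,
      factorial_succ]
    push_cast
    field_simp
    ring

theorem sqFactorialSeries_ode (y : ℝ) :
    y * sqFactorialSeries 2 y + sqFactorialSeries 1 y = sqFactorialSeries 0 y := by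
  have h2 := (summable_sqFactorialTerm 2 y).mul_left y
  have h1 := summable_sqFactorialTerm 1 y
  rw [sqFactorialSeries, sqFactorialSeries, sqFactorialSeries, ← tsum_mul_left,
    ← h2.tsum_add h1, (h2.add h1).tsum_eq_zero_add]
  simp only [sqFactorialTerm_succ_ode]
  simp [sqFactorialTerm]

theorem ode_comp_mul_sq {g : ℝ → ℝ} (hg : Differentiable ℝ g) (hg' : Differentiable ℝ (deriv g))
    (hode : ∀ y, y * deriv (deriv g) y + deriv g y = g y) (c x : ℝ) :
    x * deriv (deriv fun x => g (c * x ^ 2)) x + deriv (fun x => g (c * x ^ 2)) x =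
      4 * c * x * g (c * x ^ 2) := by
  have hsq (x : ℝ) : HasDerivAt (fun x => c * x ^ 2) (2 * c * x) x := by
    simpa [mul_comm, mul_assoc, mul_left_comm] using (hasDerivAt_pow 2 x).const_mul c
  have hderiv : deriv (fun x => g (c * x ^ 2)) = fun x => deriv g (c * x ^ 2) * (2 * c * x) :=
    funext fun x => ((hg _).hasDerivAt.comp x (hsq x)).deriv
  have hderiv2 : deriv (deriv fun x => g (c * x ^ 2)) x =
      deriv (deriv g) (c * x ^ 2) * (2 * c * x) * (2 * c * x) + deriv g (c * x ^ 2) * (2 * c) := by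
    rw [hderiv]
    exact (((hg' _).hasDerivAt.comp x (hsq x)).mul
      ((hasDerivAt_id x).const_mul (2 * c))).deriv.trans (by simp)
  rw [hderiv2, hderiv]
  linear_combination 4 * c * x * hode (c * x ^ 2)

theorem ode_exp_mul {f : ℝ → ℝ} (hf : Differentiable ℝ f) (hf' : Differentiable ℝ (deriv f))
    {b : ℝ} (hode : ∀ x, x * deriv (deriv f) x + deriv f x = b ^ 2 * x * f x) (x : ℝ) :
    x * deriv (deriv fun x => exp (-(b * x)) * f x) x +
        (2 * b * x + 1) * deriv (fun x => exp (-(b * x)) * f x) x +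
      b * (exp (-(b * x)) * f x) = 0 := by
  have hexp (x : ℝ) : HasDerivAt (fun x => exp (-(b * x))) (-b * exp (-(b * x))) x := by
    simpa [mul_comm] using ((hasDerivAt_id x).const_mul b).neg.exp
  have hderiv : deriv (fun x => exp (-(b * x)) * f x) =
      fun x => exp (-(b * x)) * (deriv f x - b * f x) :=
    funext fun x => ((hexp x).mul (hf x).hasDerivAt).deriv.trans (by ring)
  have hderiv2 : deriv (deriv fun x => exp (-(b * x)) * f x) x =
      exp (-(b * x)) * (deriv (deriv f) x - 2 * b * deriv f x + b ^ 2 * f x) := by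
    rw [hderiv]
    exact ((hexp x).mul ((hf' x).hasDerivAt.sub ((hf x).hasDerivAt.const_mul b))).deriv.trans
      (by simp only [Pi.sub_apply]; ring)
  rw [hderiv2, hderiv]
  linear_combination exp (-(b * x)) * hode x

theorem ContDiff.hasDerivAt_iteratedDeriv {𝕜 F : Type*} [NontriviallyNormedField 𝕜]
    [NormedAddCommGroup F] [NormedSpace 𝕜 F] {f : 𝕜 → F} (hf : ContDiff 𝕜 ∞ f) (m : ℕ) (x : 𝕜) :
    HasDerivAt (iteratedDeriv m f) (iteratedDeriv (m + 1) f x) x := by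
  rw [iteratedDeriv_succ]
  exact (hf.differentiable_iteratedDeriv m (by exact_mod_cast WithTop.coe_lt_top _) x).hasDerivAt

theorem ContDiff.iteratedDeriv_ode {f : ℝ → ℝ} (hf : ContDiff ℝ ∞ f) {a b c : ℝ}
    (hode : ∀ x, x * deriv (deriv f) x + (a * x + b) * deriv f x + c * f x = 0) (j : ℕ) (x : ℝ) :
    x * iteratedDeriv (j + 2) f x + (a * x + b + j) * iteratedDeriv (j + 1) f x +
      (c + j * a) * iteratedDeriv j f x = 0 := by
  induction j generalizing x with
  | zero => simpa [iteratedDeriv_succ] using hode x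
  | succ j ih =>
    have hzero := HasDerivAt.unique (hasDerivAt_const x (0 : ℝ))
      ((((hasDerivAt_id x).mul (hf.hasDerivAt_iteratedDeriv (j + 2) x)).add
        ((((hasDerivAt_id x).const_mul a).add_const (b + j)).mul
          (hf.hasDerivAt_iteratedDeriv (j + 1) x))).add
        ((hf.hasDerivAt_iteratedDeriv j x).const_mul (c + j * a)) |>.congr_of_eventuallyEq
          (.of_forall fun y => by simp [← ih y, add_assoc]))
    simp only [id, add_assoc, Nat.reduceAdd] at hzero ⊢
    push_cast
    linear_combination -hzero

theorem szaszK_eq_exp_mul (n : ℕ) :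
    szaszK n = fun x => exp (-(2 * n * x)) * sqFactorialSeries 0 (n ^ 2 * x ^ 2) := by
  funext x
  rw [szaszK, sqFactorialSeries, ← tsum_mul_left]
  refine tsum_congr fun k => ?_
  rw [sqFactorialTerm_of_le k.zero_le, div_pow, mul_pow, ← exp_nat_mul]
  simp only [Nat.sub_zero]
  push_cast
  ring_nf

theorem contDiff_szaszK (n : ℕ) : ContDiff ℝ ∞ (szaszK n) := by
  rw [szaszK_eq_exp_mul]
  exact (contDiff_const.mul contDiff_id).neg.exp.mul (contDiff_sqFactorialSeries_mul_sq _)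

theorem szaszK_ode (n : ℕ) (x : ℝ) :
    x * deriv (deriv (szaszK n)) x + (4 * n * x + 1) * deriv (szaszK n) x +
      2 * n * szaszK n x = 0 := by
  have hf := contDiff_sqFactorialSeries_mul_sq ((n : ℝ) ^ 2)
  have hscaled := ode_comp_mul_sq (differentiable_sqFactorialSeries 0)
    (deriv_sqFactorialSeries 0 ▸ differentiable_sqFactorialSeries 1)
    (by simpa [deriv_sqFactorialSeries] using sqFactorialSeries_ode) ((n : ℝ) ^ 2)
  have hK := ode_exp_mul (hf.differentiable (by simp))
    ((hf.iterate_deriv 1).differentiable (by simp)) (b := 2 * n) (fun x => by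
      linear_combination hscaled x) x
  rw [szaszK_eq_exp_mul]
  linear_combination hK

theorem stmt13_general (n : ℕ) (j : ℕ) (x : ℝ) :
    x * iteratedDeriv (j + 2) (szaszK n) x +
        (4 * (n : ℝ) * x + (j : ℝ) + 1) * iteratedDeriv (j + 1) (szaszK n) x +
        2 * (n : ℝ) * (2 * (j : ℝ) + 1) * iteratedDeriv j (szaszK n) x = 0 := by
  linear_combination (contDiff_szaszK n).iteratedDeriv_ode (szaszK_ode n) j x

theorem stmt13 (n : ℕ) (hn : 1 ≤ n) (j : ℕ) (x : ℝ) :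
    x * iteratedDeriv (j + 2) (szaszK n) x +
        (4 * (n : ℝ) * x + (j : ℝ) + 1) * iteratedDeriv (j + 1) (szaszK n) x +
        2 * (n : ℝ) * (2 * (j : ℝ) + 1) * iteratedDeriv j (szaszK n) x = 0 :=
  stmt13_general n j x
end

section
/- For all natural numbers n ≥ 1 and j ≥ 0, the j-th derivative of K_n at 0 is given by K_n^{(j)}(0) = (−2n)^j · Σ_{i=0}^{⌊j/2⌋} C(j,2i) · C(2i,i) · 4^{−i}, where K_n(x) := Σ_{k=0}^{∞} ( e^{−nx}·(nx)^k / k! )². -/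
open Finset Nat FormalMultilinearSeries

theorem Finset.sum_range_succ_ite_even {M : Type*} [AddCommMonoid M] (f : ℕ → M) (j : ℕ) :
    ∑ i ∈ range (j + 1), (if Even i then f i else 0) = ∑ k ∈ range (j / 2 + 1), f (2 * k) := by
  rw [← sum_filter]
  refine (sum_nbij' (2 * ·) (· / 2) ?_ ?_ ?_ ?_ fun _ _ => rfl).symm <;>
    intro k hk <;> simp only [mem_filter, mem_range, Nat.even_iff] at hk ⊢ <;> omega

section PowerSeries

variable {𝕜 : Type*} [RCLike 𝕜] {a : ℕ → 𝕜} {f : 𝕜 → 𝕜}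

theorem FormalMultilinearSeries.ofScalars_radius_eq_top_of_summable
    (h : ∀ y : 𝕜, Summable fun m => a m * y ^ m) : (ofScalars 𝕜 a).radius = ⊤ := by
  refine ENNReal.eq_top_of_forall_nnreal_le fun r => le_radius_of_tendsto _ (l := 0) ?_
  simpa [ofScalars_norm] using (h (r : ℝ)).tendsto_atTop_zero.norm

theorem hasFPowerSeriesOnBall_ofScalars_of_hasSum
    (h : ∀ y, HasSum (fun m => a m * y ^ m) (f y)) :
    HasFPowerSeriesOnBall f (ofScalars 𝕜 a) 0 ⊤ where
  r_le := (ofScalars_radius_eq_top_of_summable fun y => (h y).summable).ge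
  r_pos := ENNReal.zero_lt_top
  hasSum {y} _ := by simpa only [ofScalars_apply_eq, smul_eq_mul, zero_add] using h y

theorem iteratedDeriv_zero_eq_of_hasSum (h : ∀ y, HasSum (fun m => a m * y ^ m) (f y)) (m : ℕ) :
    iteratedDeriv m f 0 = m ! * a m := by
  rw [iteratedDeriv_eq_iteratedFDeriv,
    ← (hasFPowerSeriesOnBall_ofScalars_of_hasSum h).factorial_smul 1 m]
  simp

end PowerSeries

theorem summable_sq_pow_div_factorial (x : ℝ) : Summable fun k => (x ^ k / k !) ^ 2 := by
  refine (Real.summable_pow_div_factorial (x ^ 2)).of_nonneg_of_le (fun k => sq_nonneg _)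
    fun k => ?_
  rw [div_pow, ← pow_mul, mul_comm k 2, pow_mul]
  have hk : (1 : ℝ) ≤ k ! := mod_cast k.factorial_pos
  exact div_le_div_of_nonneg_left (by positivity) (by positivity) (by nlinarith)

theorem hasSum_sq_pow_div_factorial (c y : ℝ) :
    HasSum (fun m => (if Even m then c ^ m / ((m / 2) ! : ℝ) ^ 2 else 0) * y ^ m)
      (∑' k, ((c * y) ^ k / k !) ^ 2) := by
  rw [← add_zero (∑' k, _)]
  refine HasSum.even_add_odd ?_ ?_
  · convert (summable_sq_pow_div_factorial (c * y)).hasSum using 2 with k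
    simp only [even_two_mul, if_true, Nat.mul_div_cancel_left k two_pos]
    ring
  · convert hasSum_zero with k
    simp

theorem iteratedDeriv_tsum_sq_pow_div_factorial (c : ℝ) (m : ℕ) :
    iteratedDeriv m (fun x => ∑' k, ((c * x) ^ k / k !) ^ 2) 0 =
      if Even m then (m.choose (m / 2) : ℝ) * c ^ m else 0 := by
  rw [iteratedDeriv_zero_eq_of_hasSum (hasSum_sq_pow_div_factorial c)]
  split_ifs with hm
  · obtain ⟨k, rfl⟩ := hm
    have hchoose := Nat.choose_mul_factorial_mul_factorial (le_add_self : k ≤ k + k)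
    rw [Nat.add_sub_cancel] at hchoose
    rw [← two_mul, Nat.mul_div_cancel_left k two_pos, two_mul, ← hchoose]
    push_cast
    field_simp
  · rw [mul_zero]

theorem szaszK_eq_tsum_mul_exp (n : ℕ) :
    szaszK n = fun x => (∑' k, (((n : ℝ) * x) ^ k / k !) ^ 2) * Real.exp (-(2 * n) * x) := by
  ext x
  rw [szaszK, ← tsum_mul_right]
  congr 1 with k
  rw [mul_div_assoc, mul_pow, ← Real.exp_nat_mul]
  ring_nf

theorem stmt14_general (n : ℕ) (j : ℕ) :
    iteratedDeriv j (szaszK n) 0 =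
      (-(2 * (n : ℝ))) ^ j *
        ∑ i ∈ Finset.range (j / 2 + 1),
          (j.choose (2 * i) : ℝ) * ((2 * i).choose i : ℝ) / 4 ^ i := by
  have hB := (hasFPowerSeriesOnBall_ofScalars_of_hasSum (hasSum_sq_pow_div_factorial n)).analyticAt
  rw [szaszK_eq_tsum_mul_exp, iteratedDeriv_fun_mul hB.contDiffAt (by fun_prop)]
  simp only [iteratedDeriv_tsum_sq_pow_div_factorial, iteratedDeriv_exp_const_mul, mul_zero,
    Real.exp_zero, mul_one, mul_ite, ite_mul, zero_mul, sum_range_succ_ite_even, mul_sum]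
  refine sum_congr rfl fun k hk => ?_
  have h2k : 2 * k ≤ j := by rw [mem_range] at hk; omega
  rw [Nat.mul_div_cancel_left k two_pos, ← pow_sub_mul_pow _ h2k, pow_mul (-(2 * (n : ℝ))) 2 k,
    neg_sq]
  field_simp
  ring

theorem stmt14 (n : ℕ) (hn : 1 ≤ n) (j : ℕ) :
    iteratedDeriv j (szaszK n) 0 =
      (-(2 * (n : ℝ))) ^ j *
        ∑ i ∈ Finset.range (j / 2 + 1),
          (j.choose (2 * i) : ℝ) * ((2 * i).choose i : ℝ) / 4 ^ i :=
  stmt14_general n j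
end

section
/- For every natural number n ≥ 1, the function u(x) := K_n′(x) / (2n(x−1)) satisfies u(0) = 1 and, for every real x ∉ {0, 1}, the confluent Heun differential equation u″(x) + ( 4n + 2/x + 2/(x−1) ) · u′(x) + ( 4n·(5/2)·x − (6n−2) ) / ( x(x−1) ) · u(x) = 0, where K_n(x) := Σ_{k=0}^{∞} ( e^{−nx}·(nx)^k / k! )². -/
open Real Filter Topology

def EntireCoeffs (a : ℕ → ℝ) : Prop := ∀ r : ℝ, Summable fun k => a k * r ^ k

def derivCoeff (a : ℕ → ℝ) (k : ℕ) : ℝ := (k + 1) * a (k + 1)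

noncomputable def powerSum (a : ℕ → ℝ) (t : ℝ) : ℝ := ∑' k, a k * t ^ k

lemma powerSum_zero (a : ℕ → ℝ) : powerSum a 0 = a 0 := by
  rw [powerSum, tsum_eq_single 0 fun k hk => by simp [hk]]
  simp

lemma succ_mul_pow_le (k : ℕ) (r : ℝ) : (k + 1) * |r| ^ k ≤ (2 * (|r| + 1)) ^ (k + 1) := by
  rw [mul_pow]
  gcongr
  · exact_mod_cast (Nat.lt_two_pow_self (n := k + 1)).le
  · calc |r| ^ k ≤ (|r| + 1) ^ k := by gcongr; linarith
      _ ≤ (|r| + 1) ^ (k + 1) := pow_le_pow_right₀ (by linarith [abs_nonneg r]) k.le_succ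

lemma entireCoeffs_derivCoeff {a : ℕ → ℝ} (ha : EntireCoeffs a) : EntireCoeffs (derivCoeff a) := by
  intro r
  refine .of_norm_bounded ((summable_nat_add_iff 1).mpr (ha (2 * (|r| + 1))).abs) fun k => ?_
  have hk : (0 : ℝ) ≤ k + 1 := by positivity
  calc ‖derivCoeff a k * r ^ k‖ = |a (k + 1)| * ((k + 1) * |r| ^ k) := by
        rw [derivCoeff, Real.norm_eq_abs, abs_mul, abs_mul, abs_pow, abs_of_nonneg hk]
        ring
    _ ≤ |a (k + 1)| * (2 * (|r| + 1)) ^ (k + 1) := by gcongr; exact succ_mul_pow_le k r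
    _ = |a (k + 1) * (2 * (|r| + 1)) ^ (k + 1)| := by
        rw [abs_mul, abs_of_nonneg (by positivity : (0 : ℝ) ≤ (2 * (|r| + 1)) ^ (k + 1))]

namespace EntireCoeffs

variable {a : ℕ → ℝ}

lemma natCast_mul (ha : EntireCoeffs a) : EntireCoeffs fun k => k * a k := by
  intro t
  refine (summable_nat_add_iff 1).mp ((entireCoeffs_derivCoeff ha t).mul_left t |>.congr fun k => ?_)
  simp only [derivCoeff, Nat.cast_add, Nat.cast_one]
  ring

lemma mul_powerSum_derivCoeff (ha : EntireCoeffs a) (t : ℝ) :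
    t * powerSum (derivCoeff a) t = powerSum (fun k => k * a k) t := by
  rw [powerSum, powerSum, ← tsum_mul_left, (ha.natCast_mul t).tsum_eq_zero_add]
  simp only [derivCoeff, Nat.cast_zero, zero_mul, zero_add, Nat.cast_add, Nat.cast_one]
  congr 1 with k
  ring

lemma mul_powerSum_derivCoeff_derivCoeff_add (ha : EntireCoeffs a) (t : ℝ) :
    t * powerSum (derivCoeff (derivCoeff a)) t + powerSum (derivCoeff a) t =
      powerSum (fun k => (k + 1) * derivCoeff a k) t := by
  have hda := entireCoeffs_derivCoeff ha
  rw [hda.mul_powerSum_derivCoeff, powerSum, powerSum, powerSum,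
    ← (hda.natCast_mul t).tsum_add (hda t)]
  congr 1 with k
  ring

lemma hasDerivAt (ha : EntireCoeffs a) (t : ℝ) :
    HasDerivAt (powerSum a) (powerSum (derivCoeff a) t) t := by
  set R := |t| + 1
  have hR : 0 ≤ R := by positivity
  have hbound : Summable fun k : ℕ => |a k| * (k * R ^ (k - 1)) := by
    refine (summable_nat_add_iff 1).mp ((entireCoeffs_derivCoeff ha R).abs.congr fun k => ?_)
    simp only [derivCoeff, abs_mul, abs_pow, abs_of_nonneg hR, Nat.cast_add, Nat.cast_one,
      add_tsub_cancel_right, abs_of_nonneg (by positivity : (0 : ℝ) ≤ k + 1)]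
    ring
  have hbound_le (k : ℕ) (y : ℝ) (hy : y ∈ Metric.ball 0 R) :
      ‖a k * (k * y ^ (k - 1))‖ ≤ |a k| * (k * R ^ (k - 1)) := by
    have hy : |y| ≤ R := by simpa [Real.dist_eq] using (Metric.mem_ball.mp hy).le
    rw [Real.norm_eq_abs, abs_mul, abs_mul, abs_pow, Nat.abs_cast]
    gcongr
  have hderiv := hasDerivAt_tsum_of_isPreconnected hbound Metric.isOpen_ball
    (convex_ball (0 : ℝ) R).isPreconnected (g := fun k y => a k * y ^ k)
    (fun k y _ => (hasDerivAt_pow k y).const_mul (a k)) hbound_le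
    (Metric.mem_ball_self (by positivity)) (ha 0) (y := t) (by simp [R])
  refine hderiv.congr_deriv ?_
  have hsum : Summable fun k : ℕ => a k * (k * t ^ (k - 1)) := by
    refine (summable_nat_add_iff 1).mp ((entireCoeffs_derivCoeff ha t).congr fun k => ?_)
    simp only [derivCoeff, Nat.cast_add, Nat.cast_one, add_tsub_cancel_right]
    ring
  rw [hsum.tsum_eq_zero_add]
  simp only [derivCoeff, powerSum, Nat.cast_zero, zero_mul, mul_zero, zero_add,
    Nat.cast_add, Nat.cast_one, add_tsub_cancel_right]
  congr 1 with k
  ring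

end EntireCoeffs

noncomputable def invFactorialSq (k : ℕ) : ℝ := ((k.factorial : ℝ) ^ 2)⁻¹

lemma entireCoeffs_invFactorialSq : EntireCoeffs invFactorialSq := by
  intro r
  refine .of_norm_bounded (Real.summable_pow_div_factorial |r|) fun k => ?_
  have hf : (1 : ℝ) ≤ k.factorial := by exact_mod_cast k.factorial_pos
  rw [invFactorialSq, Real.norm_eq_abs, abs_mul, abs_pow, abs_inv, abs_of_pos (by positivity),
    inv_mul_eq_div]
  gcongr
  nlinarith

lemma succ_mul_derivCoeff_invFactorialSq (k : ℕ) :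
    (k + 1) * derivCoeff invFactorialSq k = invFactorialSq k := by
  simp only [derivCoeff, invFactorialSq, Nat.factorial_succ, Nat.cast_mul, Nat.cast_add,
    Nat.cast_one]
  have : (k.factorial : ℝ) ≠ 0 := by positivity
  field_simp

structure SolvesLinearODE2 (a b c y y₁ y₂ : ℝ → ℝ) : Prop where
  hasDerivAt : ∀ x, HasDerivAt y (y₁ x) x
  hasDerivAt₁ : ∀ x, HasDerivAt y₁ (y₂ x) x
  ode : ∀ x, a x * y₂ x + b x * y₁ x + c x * y x = 0

lemma solvesLinearODE2_powerSum_invFactorialSq :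
    SolvesLinearODE2 (fun s => s) (fun _ => 1) (fun _ => -1) (powerSum invFactorialSq)
      (powerSum (derivCoeff invFactorialSq))
      (powerSum (derivCoeff (derivCoeff invFactorialSq))) where
  hasDerivAt := entireCoeffs_invFactorialSq.hasDerivAt
  hasDerivAt₁ := (entireCoeffs_derivCoeff entireCoeffs_invFactorialSq).hasDerivAt
  ode s := by
    have h := entireCoeffs_invFactorialSq.mul_powerSum_derivCoeff_derivCoeff_add s
    simp only [succ_mul_derivCoeff_invFactorialSq] at h
    linear_combination h

namespace SolvesLinearODE2

variable {p : ℝ} {y y₁ y₂ : ℝ → ℝ}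

lemma comp_sq (h : SolvesLinearODE2 (fun s => s) (fun _ => 1) (fun _ => -1) y y₁ y₂) (p : ℝ) :
    SolvesLinearODE2 (fun x => x) (fun _ => 1) (fun x => -(4 * p ^ 2 * x)) (fun x => y ((p * x) ^ 2))
      (fun x => 2 * p ^ 2 * x * y₁ ((p * x) ^ 2))
      (fun x => 2 * p ^ 2 * y₁ ((p * x) ^ 2) + 4 * p ^ 4 * x ^ 2 * y₂ ((p * x) ^ 2)) := by
  have hsq (x : ℝ) : HasDerivAt (fun x => (p * x) ^ 2) (2 * p ^ 2 * x) x :=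
    (((hasDerivAt_id x).const_mul p).pow 2).congr_deriv (by simp only [id]; ring)
  refine ⟨fun x => ?_, fun x => ?_, fun x => ?_⟩
  · exact ((h.hasDerivAt _).comp x (hsq x)).congr_deriv (by ring)
  · exact (((hasDerivAt_id x).const_mul (2 * p ^ 2)).mul
      ((h.hasDerivAt₁ _).comp x (hsq x))).congr_deriv (by simp only [id, Function.comp]; ring)
  · linear_combination (4 * p ^ 2 * x) * h.ode ((p * x) ^ 2)

lemma exp_mul (h : SolvesLinearODE2 (fun x => x) (fun _ => 1) (fun x => -(4 * p ^ 2 * x)) y y₁ y₂) :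
    SolvesLinearODE2 (fun x => x) (fun x => 4 * p * x + 1) (fun _ => 2 * p)
      (fun x => exp (-(2 * p * x)) * y x) (fun x => exp (-(2 * p * x)) * (y₁ x - 2 * p * y x))
      (fun x => exp (-(2 * p * x)) * (y₂ x - 4 * p * y₁ x + 4 * p ^ 2 * y x)) := by
  have hexp (x : ℝ) :
      HasDerivAt (fun x => exp (-(2 * p * x))) (-(2 * p) * exp (-(2 * p * x))) x := by
    simpa [mul_comm] using ((hasDerivAt_id x).const_mul (-(2 * p))).exp
  refine ⟨fun x => ?_, fun x => ?_, fun x => ?_⟩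
  · exact ((hexp x).mul (h.hasDerivAt x)).congr_deriv (by ring)
  · exact ((hexp x).mul ((h.hasDerivAt₁ x).sub ((h.hasDerivAt x).const_mul (2 * p)))).congr_deriv
      (by simp only [Pi.sub_apply]; ring)
  · linear_combination exp (-(2 * p * x)) * h.ode x

/-- Where `x ≠ 0` the equation gives `y₂` in terms of `y` and `y₁`, hence a third derivative. -/
lemma hasDerivAt₂ (h : SolvesLinearODE2 (fun x => x) (fun x => 4 * p * x + 1) (fun _ => 2 * p) y y₁ y₂)
    {x : ℝ} (hx : x ≠ 0) : HasDerivAt y₂ (-((4 * p * x + 2) * y₂ x + 6 * p * y₁ x) / x) x := by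
  have hev : y₂ =ᶠ[𝓝 x] fun t => -((4 * p * t + 1) * y₁ t + 2 * p * y t) / t := by
    filter_upwards [isOpen_ne.mem_nhds hx] with t ht
    field_simp
    linear_combination h.ode t
  have hd := ((((((hasDerivAt_id x).const_mul (4 * p)).add_const 1).mul (h.hasDerivAt₁ x)).add
    ((h.hasDerivAt x).const_mul (2 * p))).neg.div (hasDerivAt_id x) hx)
  refine (hd.congr_of_eventuallyEq hev).congr_deriv ?_
  simp only [id, Pi.neg_apply, Pi.add_apply, Pi.mul_apply]
  field_simp
  linear_combination h.ode x

theorem confluentHeun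
    (h : SolvesLinearODE2 (fun x => x) (fun x => 4 * p * x + 1) (fun _ => 2 * p) y y₁ y₂)
    {c : ℝ} (hc : c ≠ 0) {x : ℝ} (hx : x ∉ ({0, 1} : Set ℝ)) :
    let u : ℝ → ℝ := fun x => deriv y x / (c * (x - 1))
    deriv (deriv u) x + (4 * p + 2 / x + 2 / (x - 1)) * deriv u x +
      (4 * p * (5 / 2) * x - (6 * p - 2)) / (x * (x - 1)) * u x = 0 := by
  intro u
  obtain ⟨hx0, hx1⟩ : x ≠ 0 ∧ x ≠ 1 := by simpa [not_or] using hx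
  have hx1' : x - 1 ≠ 0 := sub_ne_zero.mpr hx1
  have hu : u = fun t => y₁ t / (c * (t - 1)) := by
    funext t
    simp only [u, (h.hasDerivAt t).deriv]
  have hden (t : ℝ) : HasDerivAt (fun t => c * (t - 1)) c t := by
    simpa using ((hasDerivAt_id t).sub_const 1).const_mul c
  have hu' (t : ℝ) (ht : t ≠ 1) :
      HasDerivAt u ((y₂ t * (t - 1) - y₁ t) / (c * (t - 1) ^ 2)) t := by
    have ht' : t - 1 ≠ 0 := sub_ne_zero.mpr ht
    rw [hu]
    refine ((h.hasDerivAt₁ t).div (hden t) (mul_ne_zero hc ht')).congr_deriv ?_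
    field_simp
  have hu'' : HasDerivAt (fun t => (y₂ t * (t - 1) - y₁ t) / (c * (t - 1) ^ 2))
      ((-((4 * p * x + 2) * y₂ x + 6 * p * y₁ x) / x * (x - 1) ^ 2 -
        2 * (y₂ x * (x - 1) - y₁ x)) / (c * (x - 1) ^ 3)) x := by
    have hsub := (hasDerivAt_id x).sub_const 1
    refine ((((h.hasDerivAt₂ hx0).mul hsub).sub (h.hasDerivAt₁ x)).div (hsub.pow 2 |>.const_mul c)
      (mul_ne_zero hc (pow_ne_zero 2 hx1'))).congr_deriv ?_
    simp only [id, Pi.pow_apply, Pi.mul_apply, Pi.sub_apply]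
    field_simp
    ring
  have hderiv : deriv u =ᶠ[𝓝 x] fun t => (y₂ t * (t - 1) - y₁ t) / (c * (t - 1) ^ 2) := by
    filter_upwards [isOpen_ne.mem_nhds hx1] with t ht
    exact (hu' t ht).deriv
  rw [hderiv.deriv_eq, hu''.deriv, (hu' x hx1).deriv, hu]
  field_simp
  ring

end SolvesLinearODE2

lemma szaszK_eq (n : ℕ) :
    szaszK n = fun x => exp (-(2 * n * x)) * powerSum invFactorialSq ((n * x) ^ 2) := by
  funext x
  rw [szaszK, powerSum, ← tsum_mul_left]
  congr 1 with k
  have hexp : exp (-(n * x)) ^ 2 = exp (-(2 * n * x)) := by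
    rw [← Real.exp_nat_mul]
    ring_nf
  rw [invFactorialSq, div_pow, mul_pow, hexp, ← pow_mul, mul_comm k 2]
  ring

lemma exists_solvesLinearODE2_szaszK (n : ℕ) :
    ∃ K₁ K₂, SolvesLinearODE2 (fun x => x) (fun x => 4 * n * x + 1) (fun _ => 2 * n)
      (szaszK n) K₁ K₂ :=
  ⟨_, _, szaszK_eq n ▸ (solvesLinearODE2_powerSum_invFactorialSq.comp_sq n).exp_mul⟩

lemma deriv_szaszK_zero (n : ℕ) : deriv (szaszK n) 0 = -(2 * n) := by
  rw [szaszK_eq, ((solvesLinearODE2_powerSum_invFactorialSq.comp_sq n).exp_mul.hasDerivAt 0).deriv]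
  simp [powerSum_zero, invFactorialSq]

theorem stmt15 (n : ℕ) (hn : 1 ≤ n) :
    let u : ℝ → ℝ := fun x => deriv (szaszK n) x / (2 * (n : ℝ) * (x - 1))
    u 0 = 1 ∧
      ∀ x : ℝ, x ∉ ({0, 1} : Set ℝ) →
        deriv (deriv u) x +
            (4 * (n : ℝ) + 2 / x + 2 / (x - 1)) * deriv u x +
            (4 * (n : ℝ) * (5 / 2) * x - (6 * (n : ℝ) - 2)) / (x * (x - 1)) * u x = 0 := by
  intro u
  have hn0 : (n : ℝ) ≠ 0 := Nat.cast_ne_zero.mpr (by omega)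
  obtain ⟨K₁, K₂, hK⟩ := exists_solvesLinearODE2_szaszK n
  refine ⟨?_, fun x hx => hK.confluentHeun (mul_ne_zero two_ne_zero hn0) hx⟩
  simp only [u, deriv_szaszK_zero]
  field_simp
  norm_num
end
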